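/- arXiv:math/0410268 — 5 statements merged into one kernel-verified Lean document; each statement's English description precedes it below -/
import Mathlib

section
/- With the transformation coefficients S as defined, for any weak stability function τ : C → T and any κ : {1,…,n} → C (n ≥ 1), one has S({1,…,n},≤,κ,τ,τ) = 1 if n = 1 and S({1,…,n},≤,κ,τ,τ) = 0 if n > 1. -/
open scoped Classical
open Finset Function

/-- A weak stability function on `C ⊆ A` with values in a total order:
whenever `α, γ ∈ C` (so that `β = α + γ`), either `τ α ≤ τ β ≤ τ γ` or
`τ α ≥ τ β ≥ τ γ`. -/
def WeakStability {A T : Type*} [AddCommGroup A] [LinearOrder T] (C : Set A) (τ : A → T) : Prop :=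
  ∀ α γ : A, α ∈ C → γ ∈ C →
    (τ α ≤ τ (α + γ) ∧ τ (α + γ) ≤ τ γ) ∨ (τ γ ≤ τ (α + γ) ∧ τ (α + γ) ≤ τ α)

/-- Sum `κ 0 + ⋯ + κ i`. -/
def lowSum {A : Type*} [AddCommGroup A] (κ : ℕ → A) (i : ℕ) : A :=
  ∑ j ∈ Finset.range (i + 1), κ j

/-- Sum `κ (i+1) + ⋯ + κ (n-1)`. -/
def highSum {A : Type*} [AddCommGroup A] (κ : ℕ → A) (i n : ℕ) : A :=
  ∑ j ∈ Finset.Ico (i + 1) n, κ j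

/-- Condition (a) at position `i` in the definition of the coefficient `S`. -/
def SCondA {A T T' : Type*} [AddCommGroup A] [LinearOrder T] [LinearOrder T']
    (τ : A → T) (τ' : A → T') (n : ℕ) (κ : ℕ → A) (i : ℕ) : Prop :=
  τ (κ i) ≤ τ (κ (i + 1)) ∧ τ' (highSum κ i n) < τ' (lowSum κ i)

/-- Condition (b) at position `i` in the definition of the coefficient `S`. -/
def SCondB {A T T' : Type*} [AddCommGroup A] [LinearOrder T] [LinearOrder T']
    (τ : A → T) (τ' : A → T') (n : ℕ) (κ : ℕ → A) (i : ℕ) : Prop :=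
  τ (κ (i + 1)) < τ (κ i) ∧ τ' (lowSum κ i) ≤ τ' (highSum κ i n)

/-- The transformation coefficient `S({1,…,n},≤,κ,τ,τ')` for the sequence
`κ 0, …, κ (n-1)` (indexed from `0`). -/
noncomputable def Scoeff {A T T' : Type*} [AddCommGroup A] [LinearOrder T] [LinearOrder T']
    (τ : A → T) (τ' : A → T') (n : ℕ) (κ : ℕ → A) : ℤ :=
  if ∀ i ∈ Finset.range (n - 1), SCondA τ τ' n κ i ∨ SCondB τ τ' n κ i then
    (-1) ^ ((Finset.range (n - 1)).filter (SCondA τ τ' n κ)).card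
  else 0

/-- The sequence `κ 0, …, κ (n-1)` is `τ`-reversing. -/
def Reversing {A T : Type*} [AddCommGroup A] [LinearOrder T] (τ : A → T) (n : ℕ) (κ : ℕ → A) :
    Prop :=
  ∀ i, i + 1 < n → τ (κ (i + 1)) < τ (κ i)

/-- The sequence `κ 0, …, κ (n-1)` is `τ`-semistable. -/
def Semistable {A T : Type*} [AddCommGroup A] [LinearOrder T] (τ : A → T) (n : ℕ) (κ : ℕ → A) :
    Prop :=
  ∀ i, i + 1 < n → τ (lowSum κ i) ≤ τ (highSum κ i n)

/-- Extend a `Fin n`-indexed sequence to `ℕ` by zero. -/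
def toSeq {A : Type*} [AddCommGroup A] {n : ℕ} (κ : Fin n → A) : ℕ → A :=
  fun j => if h : j < n then κ ⟨j, h⟩ else 0

/-- The subsequence of `κ` on a subset `s ⊆ Fin n`, enumerated in increasing order. -/
noncomputable def fiberSeq {A : Type*} [AddCommGroup A] {n : ℕ} (κ : Fin n → A)
    (s : Finset (Fin n)) : ℕ → A :=
  fun j => if h : j < s.card then κ (s.orderIsoOfFin rfl ⟨j, h⟩).1 else 0

/-- The transformation coefficient `U({1,…,n},≤,κ,τ,τ')`. -/
noncomputable def Ucoeff {A T T' : Type*} [AddCommGroup A] [LinearOrder T] [LinearOrder T']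
    (τ : A → T) (τ' : A → T') (n : ℕ) (κ : ℕ → A) : ℚ :=
  ∑ l ∈ Finset.Icc 1 n, ∑ m ∈ Finset.Icc l n,
    ∑ p ∈ Finset.univ.filter
        (fun p : (Fin n → Fin m) × (Fin m → Fin l) =>
          Surjective p.1 ∧ Monotone p.1 ∧ Surjective p.2 ∧ Monotone p.2),
      (if (∀ i : Fin n, τ (κ i.1) =
              τ (∑ j ∈ Finset.univ.filter (fun j : Fin n => p.1 j = p.1 i), κ j.1)) ∧
          (∀ a : Fin l,
              τ' (∑ j ∈ Finset.univ.filter (fun j : Fin n => p.2 (p.1 j) = a), κ j.1) =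
              τ' (∑ j ∈ Finset.range n, κ j)) then
        (∏ a : Fin l,
          ((Scoeff τ τ' (Finset.univ.filter (fun b : Fin m => p.2 b = a)).card
            (fiberSeq
              (fun b : Fin m => ∑ j ∈ Finset.univ.filter (fun j : Fin n => p.1 j = b), κ j.1)
              (Finset.univ.filter (fun b : Fin m => p.2 b = a)))) : ℚ))
        * ((-1 : ℚ) ^ (l - 1) / (l : ℚ))
        * ∏ b : Fin m,
            ((1 : ℚ) / (Nat.factorial (Finset.univ.filter (fun j : Fin n => p.1 j = b)).card : ℚ))
      else 0)


/-! Write `c = τ (κ 0 + ⋯ + κ (n-1))`. Splitting the total sum at a position `i`, the seesaw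
inequality puts `c` between `τ (lowSum κ i)` and `τ (highSum κ i n)`; so (a) at `i` forces
`τ (highSum κ i n) ≤ c`, and (b) forces `τ (lowSum κ i) ≤ c ≤ τ (highSum κ i n)`. Scanning
from the left, at every position either (a) holds and `τ (lowSum κ i) ≤ τ (κ i)`, or (b) holds
and `τ (κ (i+1)) < c`: the first alternative propagates while (a) holds, the switch from (a)
to (b) yields `τ (κ (i+1)) ≤ c`, and once (b) occurs with this bound it persists. At the last
position `i = n-2`, where `highSum κ i n = κ (n-1)`, both alternatives are contradictory. -/

section

variable {A T : Type*} [AddCommGroup A] [LinearOrder T]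

theorem WeakStability.min_le_add {C : Set A} {τ : A → T} (hτ : WeakStability C τ) {α γ : A}
    (hα : α ∈ C) (hγ : γ ∈ C) : min (τ α) (τ γ) ≤ τ (α + γ) := by
  rcases hτ α γ hα hγ with h | h
  · exact min_le_of_left_le h.1
  · exact min_le_of_right_le h.1

theorem WeakStability.add_le_max {C : Set A} {τ : A → T} (hτ : WeakStability C τ) {α γ : A}
    (hα : α ∈ C) (hγ : γ ∈ C) : τ (α + γ) ≤ max (τ α) (τ γ) := by
  rcases hτ α γ hα hγ with h | h
  · exact le_max_of_le_right h.2
  · exact le_max_of_le_left h.2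

theorem lowSum_zero (κ : ℕ → A) : lowSum κ 0 = κ 0 := by
  simp [lowSum]

theorem lowSum_succ (κ : ℕ → A) (i : ℕ) : lowSum κ (i + 1) = lowSum κ i + κ (i + 1) :=
  Finset.sum_range_succ κ (i + 1)

theorem highSum_eq_add (κ : ℕ → A) {i n : ℕ} (h : i + 2 < n) :
    highSum κ i n = κ (i + 1) + highSum κ (i + 1) n :=
  Finset.sum_eq_sum_Ico_succ_bot (by omega) κ

theorem highSum_self_add_two (κ : ℕ → A) (i : ℕ) : highSum κ i (i + 2) = κ (i + 1) := by
  simp [highSum]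

theorem lowSum_add_highSum (κ : ℕ → A) {i n : ℕ} (h : i < n) :
    lowSum κ i + highSum κ i n = ∑ j ∈ range n, κ j :=
  Finset.sum_range_add_sum_Ico κ h

theorem lowSum_mem {C : Set A} (hC : ∀ a b : A, a ∈ C → b ∈ C → a + b ∈ C) {n : ℕ}
    {κ : ℕ → A} (hκ : ∀ i, i < n → κ i ∈ C) {i : ℕ} (h : i < n) : lowSum κ i ∈ C :=
  Finset.sum_induction_nonempty κ (· ∈ C) hC nonempty_range_add_one
    fun j hj => hκ j (by simp only [mem_range] at hj; omega)

theorem highSum_mem {C : Set A} (hC : ∀ a b : A, a ∈ C → b ∈ C → a + b ∈ C) {n : ℕ}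
    {κ : ℕ → A} (hκ : ∀ i, i < n → κ i ∈ C) {i : ℕ} (h : i + 1 < n) : highSum κ i n ∈ C :=
  Finset.sum_induction_nonempty κ (· ∈ C) hC (nonempty_Ico.2 h)
    fun j hj => hκ j (mem_Ico.1 hj).2

variable {C : Set A} {τ : A → T} {n : ℕ} {κ : ℕ → A} {i : ℕ}

theorem lowSum_le_sum_le_highSum_of_condB (hC : ∀ a b : A, a ∈ C → b ∈ C → a + b ∈ C)
    (hτ : WeakStability C τ) (hκ : ∀ i, i < n → κ i ∈ C) (hi : i + 1 < n)
    (hb : SCondB τ τ n κ i) :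
    τ (lowSum κ i) ≤ τ (∑ j ∈ range n, κ j) ∧ τ (∑ j ∈ range n, κ j) ≤ τ (highSum κ i n) := by
  have hL := lowSum_mem hC hκ (i := i) (by omega)
  have hH := highSum_mem hC hκ hi
  rw [← lowSum_add_highSum κ (by omega : i < n)]
  exact ⟨min_eq_left hb.2 ▸ hτ.min_le_add hL hH, max_eq_right hb.2 ▸ hτ.add_le_max hL hH⟩

theorem highSum_le_sum_of_condA (hC : ∀ a b : A, a ∈ C → b ∈ C → a + b ∈ C)
    (hτ : WeakStability C τ) (hκ : ∀ i, i < n → κ i ∈ C) (hi : i + 1 < n)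
    (ha : SCondA τ τ n κ i) : τ (highSum κ i n) ≤ τ (∑ j ∈ range n, κ j) := by
  rw [← lowSum_add_highSum κ (by omega : i < n)]
  exact min_eq_right ha.2.le ▸
    hτ.min_le_add (lowSum_mem hC hκ (by omega)) (highSum_mem hC hκ hi)

theorem lowSum_succ_le_of_condA (hC : ∀ a b : A, a ∈ C → b ∈ C → a + b ∈ C)
    (hτ : WeakStability C τ) (hκ : ∀ i, i < n → κ i ∈ C) (hi : i + 1 < n)
    (ha : SCondA τ τ n κ i) (hle : τ (lowSum κ i) ≤ τ (κ i)) :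
    τ (lowSum κ (i + 1)) ≤ τ (κ (i + 1)) := by
  rw [lowSum_succ]
  calc τ (lowSum κ i + κ (i + 1)) ≤ max (τ (lowSum κ i)) (τ (κ (i + 1))) :=
        hτ.add_le_max (lowSum_mem hC hκ (by omega)) (hκ _ hi)
    _ = τ (κ (i + 1)) := max_eq_right (hle.trans ha.1)

theorem le_sum_of_condA_of_condB_succ (hC : ∀ a b : A, a ∈ C → b ∈ C → a + b ∈ C)
    (hτ : WeakStability C τ) (hκ : ∀ i, i < n → κ i ∈ C) (hi : i + 2 < n)
    (ha : SCondA τ τ n κ i) (hb : SCondB τ τ n κ (i + 1)) :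
    τ (κ (i + 1)) ≤ τ (∑ j ∈ range n, κ j) := by
  set c := τ (∑ j ∈ range n, κ j)
  by_contra! hlt
  obtain ⟨hLc, hcH⟩ := lowSum_le_sum_le_highSum_of_condB hC hτ hκ hi hb
  have hHc := highSum_le_sum_of_condA hC hτ hκ (by omega) ha
  have hcH' : c ≤ τ (highSum κ i n) := by
    rw [highSum_eq_add κ hi]
    exact (le_min hlt.le hcH).trans (hτ.min_le_add (hκ _ (by omega)) (highSum_mem hC hκ hi))
  have hcL : c < τ (lowSum κ i) := (le_antisymm hHc hcH').symm.trans_lt ha.2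
  have : c < τ (lowSum κ (i + 1)) := by
    rw [lowSum_succ]
    exact (lt_min hcL hlt).trans_le
      (hτ.min_le_add (lowSum_mem hC hκ (by omega)) (hκ _ (by omega)))
  exact this.not_ge hLc

theorem not_condA_succ_of_condB (hC : ∀ a b : A, a ∈ C → b ∈ C → a + b ∈ C)
    (hτ : WeakStability C τ) (hκ : ∀ i, i < n → κ i ∈ C) (hi : i + 2 < n)
    (hb : SCondB τ τ n κ i) (hlt : τ (κ (i + 1)) < τ (∑ j ∈ range n, κ j)) :
    ¬ SCondA τ τ n κ (i + 1) := by
  set c := τ (∑ j ∈ range n, κ j)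
  intro ha
  obtain ⟨hLc, hcH⟩ := lowSum_le_sum_le_highSum_of_condB hC hτ hκ (by omega) hb
  have hL : τ (lowSum κ (i + 1)) ≤ c := by
    rw [lowSum_succ]
    exact (hτ.add_le_max (lowSum_mem hC hκ (by omega)) (hκ _ (by omega))).trans
      (max_le hLc hlt.le)
  have hH : c ≤ τ (highSum κ (i + 1) n) := by
    rw [highSum_eq_add κ hi] at hcH
    have := hcH.trans (hτ.add_le_max (hκ _ (by omega)) (highSum_mem hC hκ (by omega)))
    exact (le_max_iff.1 this).resolve_left hlt.not_ge
  exact (ha.2.trans_le hL).not_ge hH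

theorem not_forall_condA_or_condB (hC : ∀ a b : A, a ∈ C → b ∈ C → a + b ∈ C)
    (hτ : WeakStability C τ) (hκ : ∀ i, i < n → κ i ∈ C) (hn : 2 ≤ n) :
    ¬ ∀ i, i + 1 < n → SCondA τ τ n κ i ∨ SCondB τ τ n κ i := by
  intro H
  have scan : ∀ i, i + 1 < n →
      (SCondA τ τ n κ i ∧ τ (lowSum κ i) ≤ τ (κ i)) ∨
        (SCondB τ τ n κ i ∧ τ (κ (i + 1)) < τ (∑ j ∈ range n, κ j)) := by
    intro i hi
    induction i with
    | zero =>
      rcases H 0 hi with ha | hb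
      · exact .inl ⟨ha, (congrArg τ (lowSum_zero κ)).le⟩
      · refine .inr ⟨hb, hb.1.trans_le ?_⟩
        simpa [lowSum_zero] using (lowSum_le_sum_le_highSum_of_condB hC hτ hκ hi hb).1
    | succ i ih =>
      rcases ih (by omega) with ⟨ha, hle⟩ | ⟨hb, hlt⟩
      · rcases H (i + 1) hi with ha' | hb'
        · exact .inl ⟨ha', lowSum_succ_le_of_condA hC hτ hκ (by omega) ha hle⟩
        · exact .inr ⟨hb', hb'.1.trans_le (le_sum_of_condA_of_condB_succ hC hτ hκ hi ha hb')⟩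
      · have hb' := (H (i + 1) hi).resolve_left (not_condA_succ_of_condB hC hτ hκ hi hb hlt)
        exact .inr ⟨hb', hb'.1.trans hlt⟩
  obtain ⟨m, rfl⟩ : ∃ m, n = m + 2 := ⟨n - 2, by omega⟩
  rcases scan m (by omega) with ⟨ha, hle⟩ | ⟨hb, hlt⟩
  · have := ha.2
    rw [highSum_self_add_two] at this
    exact (this.trans_le (hle.trans ha.1)).false
  · have := (lowSum_le_sum_le_highSum_of_condB hC hτ hκ (by omega) hb).2
    rw [highSum_self_add_two] at this
    exact (hlt.trans_le this).false

end

theorem stmt1_general {A T : Type*} [AddCommGroup A] [LinearOrder T]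
    (C : Set A) (hC : ∀ a b : A, a ∈ C → b ∈ C → a + b ∈ C)
    (τ : A → T) (hτ : WeakStability C τ)
    (n : ℕ) (hn : 1 ≤ n) (κ : ℕ → A) (hκ : ∀ i, i < n → κ i ∈ C) :
    Scoeff τ τ n κ = if n = 1 then 1 else 0 := by
  rcases hn.eq_or_lt with rfl | hn
  · simp [Scoeff]
  · rw [if_neg hn.ne', Scoeff, if_neg]
    intro H
    exact not_forall_condA_or_condB hC hτ hκ hn fun i hi => H i (mem_range.2 (by omega))

theorem stmt1 {A T : Type*} [AddCommGroup A] [LinearOrder T]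
    (C : Set A) (hC : ∀ a b : A, a ∈ C → b ∈ C → a + b ∈ C) (h0 : (0 : A) ∉ C)
    (τ : A → T) (hτ : WeakStability C τ)
    (n : ℕ) (hn : 1 ≤ n) (κ : ℕ → A) (hκ : ∀ i, i < n → κ i ∈ C) :
    Scoeff τ τ n κ = if n = 1 then 1 else 0 :=
  stmt1_general C hC τ hτ n hn κ hκ
end

section
/- (Alternative formula for S.) Let τ : C → T and τ̃ : C → T̃ be weak stability functions and κ : {1,…,n} → C. Then S({1,…,n},≤,κ,τ,τ̃) = Σ_{1≤b≤a≤n} Σ_{(α,β)} (−1)^{a−b}, where the inner sum is over all pairs of surjective maps α : {1,…,n} → {1,…,a} and β : {1,…,a} → {1,…,b} with i ≤ j implying α(i) ≤ α(j) and β(i) ≤ β(j), such that for each j = 1,…,a the subsequence (κ(i))_{i∈α⁻¹(j)} is τ-reversing, and, setting ν(k) = κ((β∘α)⁻¹(k)) for k = 1,…,b, the sequence (ν(1),…,ν(b)) is τ̃-semistable. -/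
/-!
A monotone surjection `α : Fin n → Fin a` is determined by its jump set `S ⊆ {0, …, n-2}`, a set
of size `a - 1`, and a pair `(α, β)` by the nested pair `F ⊆ S`, where `F` is the jump set of
`β ∘ α`. The fibres of `α` are `τ`-reversing exactly when `S` contains every ascent of `τ ∘ κ`,
and `ν` is `τ̃`-semistable exactly when `F` avoids the set `U` of cuts at which `τ̃` drops.
Summing `(-1)^(|S| - |F|)` over `F ⊆ S \ U` leaves `(-1)^|S|` if `S ⊆ U` and `0` otherwise, and
the alternating sum over the interval `Asc ⊆ S ⊆ U` is `(-1)^|Asc|` if `Asc = U` and `0`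
otherwise. That is the definition of `S`: condition (a) at `i` says that `i` is both an ascent
and an unstable cut, and (b) says that it is neither.
-/

open scoped Classical
open Finset Function

section Count

variable (S : Finset ℕ)

theorem Nat.count_mem_le_card (i : ℕ) : count (· ∈ S) i ≤ #S := by
  rw [count_eq_card_filter_range]
  exact card_le_card fun x hx => (mem_filter.mp hx).2

theorem Nat.count_mem_eq_card {m : ℕ} (hS : S ⊆ range m) : count (· ∈ S) m = #S := by
  rw [count_eq_card_filter_range, filter_mem_eq_inter, inter_eq_right.mpr hS]

variable {S} in
theorem Nat.count_mem_lt_card {i : ℕ} (hi : i ∈ S) : count (· ∈ S) i < #S :=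
  (count_lt_count_succ_iff.mpr hi).trans_le (count_mem_le_card S _)

variable {S} in
theorem Nat.count_mem_lt_count_mem_iff {f : ℕ} (hf : f ∈ S) (i : ℕ) :
    count (· ∈ S) f < count (· ∈ S) i ↔ f < i :=
  ⟨lt_of_count_lt_count, count_strict_mono hf⟩

theorem Nat.image_count_mem : S.image (count (· ∈ S)) = range #S :=
  eq_of_subset_of_card_le
    (fun _ hk => by
      obtain ⟨i, hi, rfl⟩ := mem_image.mp hk
      exact mem_range.mpr (count_mem_lt_card hi))
    (by rw [card_range, Finset.card_image_of_injOn (f := count (· ∈ S)) (s := S)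
      fun _ hi _ hj => count_injective hi hj])

end Count

section JumpSet

variable {n a b : ℕ}

theorem Monotone.val_eq_zero_of_surjective {p : Fin n → Fin a} (hp : Monotone p)
    (hs : Surjective p) (h : 0 < n) : (p ⟨0, h⟩ : ℕ) = 0 := by
  obtain ⟨x, hx⟩ := hs ⟨0, (p ⟨0, h⟩).pos⟩
  have := Fin.le_def.mp (hp (show (⟨0, h⟩ : Fin n) ≤ x from Fin.le_def.mpr (Nat.zero_le _)))
  rwa [hx, Nat.le_zero] at this

theorem Monotone.val_succ_le_of_surjective {p : Fin n → Fin a} (hp : Monotone p)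
    (hs : Surjective p) {i : ℕ} (h : i + 1 < n) :
    (p ⟨i + 1, h⟩ : ℕ) ≤ p ⟨i, by omega⟩ + 1 := by
  by_contra! hgap
  have := (p ⟨i + 1, h⟩).isLt
  obtain ⟨x, hx⟩ := hs ⟨p ⟨i, by omega⟩ + 1, by omega⟩
  rcases le_or_gt x ⟨i, by omega⟩ with hxi | hxi
  · have := Fin.le_def.mp (hp hxi)
    rw [hx] at this
    simp at this
  · have := Fin.le_def.mp (hp (show (⟨i + 1, h⟩ : Fin n) ≤ x from Fin.le_def.mpr hxi))
    rw [hx] at this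
    simp only at this
    omega

def jumpSet (p : Fin n → Fin a) : Finset ℕ :=
  (range (n - 1)).filter fun i => ∃ h : i + 1 < n, p ⟨i, by omega⟩ ≠ p ⟨i + 1, h⟩

theorem mem_jumpSet {p : Fin n → Fin a} {i : ℕ} :
    i ∈ jumpSet p ↔ ∃ h : i + 1 < n, p ⟨i, by omega⟩ ≠ p ⟨i + 1, h⟩ := by
  simp only [jumpSet, mem_filter, mem_range]
  exact ⟨fun h => h.2, fun h => ⟨by obtain ⟨h', -⟩ := h; omega, h⟩⟩

theorem jumpSet_subset_range (p : Fin n → Fin a) : jumpSet p ⊆ range (n - 1) :=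
  filter_subset _ _

theorem jumpSet_comp_subset (p : Fin n → Fin a) (q : Fin a → Fin b) :
    jumpSet (q ∘ p) ⊆ jumpSet p := fun _ hi => by
  obtain ⟨h, hne⟩ := mem_jumpSet.mp hi
  exact mem_jumpSet.mpr ⟨h, fun heq => hne (congrArg q heq)⟩

theorem jumpSet_eq_of_val_eq_count {F : Finset ℕ} (hF : F ⊆ range (n - 1)) {r : Fin n → Fin b}
    (hr : ∀ x, (r x : ℕ) = Nat.count (· ∈ F) x) : jumpSet r = F := by
  ext i
  rw [mem_jumpSet]
  constructor
  · rintro ⟨h, hne⟩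
    rw [Ne, Fin.ext_iff, hr, hr] at hne
    by_contra hi
    exact hne (Nat.count_succ_eq_count_iff.mpr hi).symm
  · intro hi
    have := mem_range.mp (hF hi)
    refine ⟨by omega, fun heq => ?_⟩
    rw [Fin.ext_iff, hr, hr, Nat.count_succ, if_pos hi] at heq
    exact Nat.succ_ne_self _ heq.symm

theorem Monotone.val_eq_count_jumpSet {p : Fin n → Fin a} (hp : Monotone p)
    (hs : Surjective p) (x : Fin n) : (p x : ℕ) = Nat.count (· ∈ jumpSet p) x := by
  obtain ⟨i, hi⟩ := x
  induction i with
  | zero => simpa using hp.val_eq_zero_of_surjective hs hi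
  | succ i ih =>
    rw [Nat.count_succ, ← ih (by omega)]
    have hle := Fin.le_def.mp (hp (show (⟨i, by omega⟩ : Fin n) ≤ ⟨i + 1, hi⟩ from
      Fin.le_def.mpr (Nat.le_succ i)))
    have hstep := hp.val_succ_le_of_surjective hs hi
    by_cases hJ : i ∈ jumpSet p
    · obtain ⟨_, hne⟩ := mem_jumpSet.mp hJ
      rw [if_pos hJ]
      exact le_antisymm hstep (Nat.succ_le_of_lt (lt_of_le_of_ne hle (Fin.val_ne_of_ne hne)))
    · have heq : p ⟨i, by omega⟩ = p ⟨i + 1, hi⟩ := by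
        by_contra hne
        exact hJ (mem_jumpSet.mpr ⟨hi, hne⟩)
      rw [if_neg hJ, heq, add_zero]

theorem Monotone.card_jumpSet {p : Fin n → Fin a} (hp : Monotone p) (hs : Surjective p)
    (hn : 0 < n) : #(jumpSet p) + 1 = a := by
  have hlast : (p ⟨n - 1, by omega⟩ : ℕ) = #(jumpSet p) := by
    rw [hp.val_eq_count_jumpSet hs, Nat.count_mem_eq_card _ (jumpSet_subset_range p)]
  have ha : 0 < a := (p ⟨0, hn⟩).pos
  obtain ⟨x, hx⟩ := hs ⟨a - 1, by omega⟩
  have hx_le := Fin.le_def.mp (hp (show x ≤ ⟨n - 1, by omega⟩ from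
    Fin.le_def.mpr (Nat.le_sub_one_of_lt x.isLt)))
  rw [hx, hlast] at hx_le
  have := hlast ▸ (p ⟨n - 1, by omega⟩).isLt
  simp only at hx_le
  omega

theorem Monotone.eq_of_jumpSet_eq {p p' : Fin n → Fin a} (hp : Monotone p) (hs : Surjective p)
    (hp' : Monotone p') (hs' : Surjective p') (h : jumpSet p = jumpSet p') : p = p' :=
  funext fun x => Fin.ext <| by
    rw [hp.val_eq_count_jumpSet hs, hp'.val_eq_count_jumpSet hs', h]

end JumpSet

section CutMap

variable {n : ℕ}

/-- The monotone map sending a position to the index of its block when `{0, …, n-1}` is cut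
after every element of `S`. -/
def cutMap (S : Finset ℕ) (n : ℕ) : Fin n → Fin (#S + 1) :=
  fun i => ⟨Nat.count (· ∈ S) i, Nat.lt_succ_of_le (Nat.count_mem_le_card S i)⟩

theorem monotone_cutMap (S : Finset ℕ) : Monotone (cutMap S n) :=
  fun _ _ h => Fin.le_def.mpr (Nat.count_monotone _ h)

theorem surjective_cutMap {S : Finset ℕ} (hn : 0 < n) (hS : S ⊆ range (n - 1)) :
    Surjective (cutMap S n) := by
  rintro ⟨k, hk⟩
  rcases (Nat.lt_succ_iff.mp hk).lt_or_eq with hk | rfl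
  · obtain ⟨i, hi, hik⟩ := mem_image.mp ((Nat.image_count_mem S).symm ▸ mem_range.mpr hk)
    have := mem_range.mp (hS hi)
    exact ⟨⟨i, by omega⟩, Fin.ext hik⟩
  · exact ⟨⟨n - 1, by omega⟩, Fin.ext (Nat.count_mem_eq_card S hS)⟩

theorem jumpSet_cutMap {S : Finset ℕ} (hS : S ⊆ range (n - 1)) : jumpSet (cutMap S n) = S :=
  jumpSet_eq_of_val_eq_count hS fun _ => rfl

/-- Sends the index of an `S`-block to the index of the `F`-block containing it. -/
def blockCutMap (S F : Finset ℕ) (a : ℕ) : Fin a → Fin (#F + 1) :=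
  fun j => ⟨#(F.filter fun f => Nat.count (· ∈ S) f < j), Nat.lt_succ_of_le (card_filter_le _ _)⟩

theorem monotone_blockCutMap (S F : Finset ℕ) (a : ℕ) : Monotone (blockCutMap S F a) :=
  fun _ _ h => Fin.le_def.mpr <| card_le_card fun f hf => by
    simp only [mem_filter] at hf ⊢
    exact ⟨hf.1, hf.2.trans_le (Fin.le_def.mp h)⟩

theorem blockCutMap_comp_cutMap {S F : Finset ℕ} (hFS : F ⊆ S) :
    blockCutMap S F (#S + 1) ∘ cutMap S n = cutMap F n := by
  funext x
  refine Fin.ext ?_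
  change #(F.filter fun f => Nat.count (· ∈ S) f < Nat.count (· ∈ S) x) = Nat.count (· ∈ F) x
  rw [Nat.count_eq_card_filter_range (· ∈ F)]
  congr 1
  ext f
  simp only [mem_filter, mem_range]
  exact ⟨fun ⟨hf, hlt⟩ => ⟨(Nat.count_mem_lt_count_mem_iff (hFS hf) x).mp hlt, hf⟩,
    fun ⟨hlt, hf⟩ => ⟨hf, (Nat.count_mem_lt_count_mem_iff (hFS hf) x).mpr hlt⟩⟩

end CutMap

theorem sum_monotone_surjective_pairs {M : Type*} [AddCommMonoid M] {n : ℕ} (hn : 0 < n)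
    (P : Finset ℕ → Finset ℕ → Prop) [∀ S F, Decidable (P S F)] (g : ℕ → ℕ → M) :
    ∑ a ∈ Icc 1 n, ∑ b ∈ Icc 1 a,
      ∑ _p ∈ univ.filter (fun p : (Fin n → Fin a) × (Fin a → Fin b) =>
        Surjective p.1 ∧ Monotone p.1 ∧ Surjective p.2 ∧ Monotone p.2 ∧
          P (jumpSet p.1) (jumpSet (p.2 ∘ p.1))), g a b =
    ∑ q ∈ ((range (n - 1)).powerset ×ˢ (range (n - 1)).powerset).filter
        (fun q => q.2 ⊆ q.1 ∧ P q.1 q.2), g (#q.1 + 1) (#q.2 + 1) := by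
  simp_rw [sum_sigma']
  refine sum_bij (fun x _ => (jumpSet x.2.2.1, jumpSet (x.2.2.2 ∘ x.2.2.1))) ?_ ?_ ?_ ?_
  · rintro ⟨a, b, p⟩ hx
    simp only [mem_sigma, mem_filter, mem_univ, true_and] at hx
    obtain ⟨-, -, -, -, -, -, hP⟩ := hx
    simp only [mem_filter, mem_product, mem_powerset]
    exact ⟨⟨jumpSet_subset_range _, jumpSet_subset_range _⟩, jumpSet_comp_subset _ _, hP⟩
  · rintro ⟨a, b, p, q⟩ hx ⟨a', b', p', q'⟩ hx' h
    simp only [mem_sigma, mem_filter, mem_univ, true_and] at hx hx'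
    obtain ⟨-, -, hps, hp, hqs, hq, -⟩ := hx
    obtain ⟨-, -, hps', hp', hqs', hq', -⟩ := hx'
    simp only [Prod.mk.injEq] at h
    obtain rfl : a = a' := by rw [← hp.card_jumpSet hps hn, ← hp'.card_jumpSet hps' hn, h.1]
    obtain rfl : b = b' := by
      rw [← (hq.comp hp).card_jumpSet (hqs.comp hps) hn,
        ← (hq'.comp hp').card_jumpSet (hqs'.comp hps') hn, h.2]
    obtain rfl : p = p' := hp.eq_of_jumpSet_eq hps hp' hps' h.1
    obtain rfl : q = q' := hps.injective_comp_right <|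
      (hq.comp hp).eq_of_jumpSet_eq (hqs.comp hps) (hq'.comp hp) (hqs'.comp hps) h.2
    rfl
  · rintro ⟨S, F⟩ hSF
    simp only [mem_filter, mem_product, mem_powerset] at hSF
    obtain ⟨⟨hS, hF⟩, hFS, hP⟩ := hSF
    have hcomp := blockCutMap_comp_cutMap (n := n) hFS
    have hSn : #S ≤ n - 1 := by simpa using card_le_card hS
    refine ⟨⟨#S + 1, #F + 1, cutMap S n, blockCutMap S F (#S + 1)⟩, ?_, ?_⟩
    · simp only [mem_sigma, mem_Icc, mem_filter, mem_univ, true_and]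
      refine ⟨by omega, ⟨by omega, by simpa using card_le_card hFS⟩, surjective_cutMap hn hS,
        monotone_cutMap S, ?_, monotone_blockCutMap S F _, ?_⟩
      · exact Surjective.of_comp (hcomp ▸ surjective_cutMap hn hF)
      · rwa [hcomp, jumpSet_cutMap hS, jumpSet_cutMap hF]
    · simp only [hcomp, jumpSet_cutMap hS, jumpSet_cutMap hF]
  · rintro ⟨a, b, p, q⟩ hx
    simp only [mem_sigma, mem_filter, mem_univ, true_and] at hx
    obtain ⟨-, -, hps, hp, hqs, hq, -⟩ := hx
    simp only [hp.card_jumpSet hps hn, (hq.comp hp).card_jumpSet (hqs.comp hps) hn]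

section Fibers

variable {A T : Type*} [AddCommGroup A] [LinearOrder T] {n : ℕ}

theorem toSeq_of_lt (κ : Fin n → A) {i : ℕ} (h : i < n) : toSeq κ i = κ ⟨i, h⟩ :=
  dif_pos h

theorem fiberSeq_of_lt (κ : Fin n → A) (s : Finset (Fin n)) {t : ℕ} (ht : t < #s) :
    fiberSeq κ s t = κ (s.orderEmbOfFin rfl ⟨t, ht⟩) := by
  rw [fiberSeq, dif_pos ht, coe_orderIsoOfFin_apply]

theorem Finset.val_orderEmbOfFin_succ {s : Finset (Fin n)} (hs : (s : Set (Fin n)).OrdConnected)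
    {t : ℕ} (ht : t + 1 < #s) :
    (s.orderEmbOfFin rfl ⟨t + 1, ht⟩ : ℕ) = s.orderEmbOfFin rfl ⟨t, by omega⟩ + 1 := by
  set e := s.orderEmbOfFin rfl
  have hlt : (e ⟨t, by omega⟩ : ℕ) < e ⟨t + 1, ht⟩ :=
    Fin.lt_def.mp (e.strictMono (Fin.lt_def.mpr (Nat.lt_succ_self t)))
  by_contra hne
  have hy := (e ⟨t + 1, ht⟩).isLt
  let z : Fin n := ⟨e ⟨t, by omega⟩ + 1, by omega⟩
  have hz : z ∈ s := hs.out (orderEmbOfFin_mem s rfl _ : e ⟨t, by omega⟩ ∈ s)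
    (orderEmbOfFin_mem s rfl _ : e ⟨t + 1, ht⟩ ∈ s)
    ⟨Fin.le_def.mpr (Nat.le_succ _),
      Fin.le_def.mpr (show (e ⟨t, _⟩ : ℕ) + 1 ≤ e ⟨t + 1, ht⟩ by omega)⟩
  obtain ⟨u, hu⟩ : z ∈ Set.range e := by rwa [range_orderEmbOfFin]
  have h1 : (⟨t, by omega⟩ : Fin #s) < u := by
    rw [← e.lt_iff_lt, hu, Fin.lt_def]
    exact Nat.lt_succ_self _
  have h2 : u < ⟨t + 1, ht⟩ := by
    rw [← e.lt_iff_lt, hu, Fin.lt_def]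
    simp only [z]
    omega
  rw [Fin.lt_def] at h1 h2
  simp only at h1 h2
  omega

theorem reversing_fiberSeq_iff (τ : A → T) (κ : Fin n → A) {s : Finset (Fin n)}
    (hs : (s : Set (Fin n)).OrdConnected) :
    Reversing τ #s (fiberSeq κ s) ↔ ∀ i ∈ s, ∀ j ∈ s, (j : ℕ) = i + 1 → τ (κ j) < τ (κ i) := by
  set e := s.orderEmbOfFin rfl
  constructor
  · intro h i hi j hj hij
    obtain ⟨t, rfl⟩ : i ∈ Set.range e := by rwa [range_orderEmbOfFin]
    obtain ⟨u, rfl⟩ : j ∈ Set.range e := by rwa [range_orderEmbOfFin]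
    have htu : t < u := e.lt_iff_lt.mp (Fin.lt_def.mpr (by omega))
    have ht : (t : ℕ) + 1 < #s := by have := u.isLt; rw [Fin.lt_def] at htu; omega
    have hsucc : e ⟨t + 1, ht⟩ = e u := Fin.ext (by rw [Finset.val_orderEmbOfFin_succ hs ht, hij])
    have := h t ht
    rwa [fiberSeq_of_lt κ s ht, fiberSeq_of_lt κ s t.isLt, hsucc] at this
  · intro h t ht
    rw [fiberSeq_of_lt κ s ht, fiberSeq_of_lt κ s (by omega)]
    exact h _ (orderEmbOfFin_mem s rfl _) _ (orderEmbOfFin_mem s rfl _)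
      (Finset.val_orderEmbOfFin_succ hs ht)

def ascentSet (τ : A → T) (n : ℕ) (κ : ℕ → A) : Finset ℕ :=
  (range (n - 1)).filter fun i => τ (κ i) ≤ τ (κ (i + 1))

theorem forall_reversing_fiberSeq_iff (τ : A → T) (κ : Fin n → A) {a : ℕ} {p : Fin n → Fin a}
    (hp : Monotone p) :
    (∀ j : Fin a, Reversing τ #(univ.filter fun i => p i = j)
        (fiberSeq κ (univ.filter fun i => p i = j))) ↔
      ascentSet τ n (toSeq κ) ⊆ jumpSet p := by
  have hconn (j : Fin a) :
      ((univ.filter fun i => p i = j : Finset (Fin n)) : Set (Fin n)).OrdConnected := by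
    simpa [Set.preimage] using (Set.ordConnected_singleton (a := j)).preimage_mono hp
  simp only [reversing_fiberSeq_iff τ κ (hconn _), mem_filter, mem_univ, true_and]
  constructor
  · intro h i hi
    simp only [ascentSet, mem_filter, mem_range] at hi
    refine mem_jumpSet.mpr ⟨by omega, fun heq => ?_⟩
    rw [toSeq_of_lt κ (by omega), toSeq_of_lt κ (by omega)] at hi
    exact absurd (h _ ⟨i, by omega⟩ rfl ⟨i + 1, by omega⟩ heq.symm rfl) (not_lt.mpr hi.2)
  · rintro h _ i rfl i' hi' hii'
    by_contra hlt
    have hasc : (i : ℕ) ∈ ascentSet τ n (toSeq κ) := by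
      have := i'.isLt
      simp only [ascentSet, mem_filter, mem_range]
      rw [toSeq_of_lt κ i.isLt, toSeq_of_lt κ (by omega)]
      exact ⟨by omega, by simpa [← hii'] using not_lt.mp hlt⟩
    obtain ⟨_, hne⟩ := mem_jumpSet.mp (h hasc)
    exact hne (by simpa [← hii'] using hi'.symm)

end Fibers

section Semistable

variable {A T' : Type*} [AddCommGroup A] [LinearOrder T'] {n b : ℕ}

/-- The sequence `ν` of the statement, for `r = β ∘ α`. -/
def fiberSumSeq (r : Fin n → Fin b) (κ : Fin n → A) : ℕ → A :=
  fun k => if h : k < b then ∑ i ∈ univ.filter (fun i => r i = ⟨k, h⟩), κ i else 0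

theorem fiberSumSeq_apply (r : Fin n → Fin b) (κ : Fin n → A) (k : ℕ) :
    fiberSumSeq r κ k = ∑ i ∈ univ.filter (fun i => (r i : ℕ) = k), κ i := by
  unfold fiberSumSeq
  split_ifs with h
  · simp only [Fin.ext_iff]
  · refine (sum_eq_zero fun i hi => absurd ?_ h).symm
    rw [← (mem_filter.mp hi).2]
    exact (r i).isLt

theorem fiberSumSeq_id (κ : Fin n → A) : fiberSumSeq id κ = toSeq κ :=
  funext fun k => by
    unfold fiberSumSeq toSeq
    split_ifs <;> simp [filter_eq']

theorem lowSum_fiberSumSeq (r : Fin n → Fin b) (κ : Fin n → A) (k : ℕ) :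
    lowSum (fiberSumSeq r κ) k = ∑ i ∈ univ.filter (fun i => (r i : ℕ) ≤ k), κ i := by
  simp only [lowSum, fiberSumSeq_apply, sum_fiberwise_eq_sum_filter, mem_range, Nat.lt_succ_iff]

theorem highSum_fiberSumSeq (r : Fin n → Fin b) (κ : Fin n → A) (k : ℕ) :
    highSum (fiberSumSeq r κ) k b = ∑ i ∈ univ.filter (fun i => k < (r i : ℕ)), κ i := by
  simp only [highSum, fiberSumSeq_apply, sum_fiberwise_eq_sum_filter, mem_Ico, Nat.succ_le_iff]
  exact sum_congr (filter_congr fun i _ => and_iff_left (r i).isLt) fun _ _ => rfl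

def unstableCuts (τ' : A → T') (n : ℕ) (κ : ℕ → A) : Finset ℕ :=
  (range (n - 1)).filter fun i => τ' (highSum κ i n) < τ' (lowSum κ i)

theorem semistable_fiberSumSeq_iff (τ' : A → T') (κ : Fin n → A) {r : Fin n → Fin b}
    (hn : 0 < n) (hr : Monotone r) (hs : Surjective r) :
    Semistable τ' b (fiberSumSeq r κ) ↔ Disjoint (jumpSet r) (unstableCuts τ' n (toSeq κ)) := by
  have hb := hr.card_jumpSet hs hn
  set J := jumpSet r
  have hle (i : ℕ) (hi : i ∈ J) (x : Fin n) : (r x : ℕ) ≤ Nat.count (· ∈ J) i ↔ (x : ℕ) ≤ i := by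
    rw [hr.val_eq_count_jumpSet hs, ← not_lt, ← not_lt, Nat.count_mem_lt_count_mem_iff hi]
  have hlow (i : ℕ) (hi : i ∈ J) :
      lowSum (fiberSumSeq r κ) (Nat.count (· ∈ J) i) = lowSum (toSeq κ) i := by
    rw [← fiberSumSeq_id, lowSum_fiberSumSeq, lowSum_fiberSumSeq]
    simp only [hle i hi, id]
  have hhigh (i : ℕ) (hi : i ∈ J) :
      highSum (fiberSumSeq r κ) (Nat.count (· ∈ J) i) b = highSum (toSeq κ) i n := by
    rw [← fiberSumSeq_id, highSum_fiberSumSeq, highSum_fiberSumSeq]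
    simp only [← not_le, hle i hi, id]
  calc Semistable τ' b (fiberSumSeq r κ)
      ↔ ∀ k ∈ range #J, τ' (lowSum (fiberSumSeq r κ) k) ≤ τ' (highSum (fiberSumSeq r κ) k b) :=
        forall_congr' fun k => by rw [mem_range]; exact imp_congr_left (by omega)
    _ ↔ ∀ i ∈ J, τ' (lowSum (toSeq κ) i) ≤ τ' (highSum (toSeq κ) i n) := by
        rw [← Nat.image_count_mem, forall_mem_image]
        exact forall₂_congr fun i hi => by rw [hlow i hi, hhigh i hi]
    _ ↔ Disjoint J (unstableCuts τ' n (toSeq κ)) := by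
        rw [disjoint_left]
        refine forall₂_congr fun i hi => ?_
        simp [unstableCuts, jumpSet_subset_range r hi]

end Semistable

section AlternatingSum

variable {α : Type*} [DecidableEq α]

theorem sum_Icc_neg_one_pow_card (s t : Finset α) :
    ∑ u ∈ Icc s t, (-1 : ℤ) ^ #u = if s = t then (-1) ^ #s else 0 := by
  by_cases hst : s ⊆ t
  · have hdisj {x} (hx : x ∈ (t \ s).powerset) : Disjoint s x :=
      disjoint_of_subset_right (mem_powerset.mp hx) disjoint_sdiff
    rw [Icc_eq_image_powerset hst, sum_image fun x hx y hy h => by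
      rw [← union_sdiff_cancel_left (hdisj hx), h, union_sdiff_cancel_left (hdisj hy)]]
    rw [sum_congr rfl fun x hx => by rw [card_union_of_disjoint (hdisj hx), pow_add],
      ← mul_sum, sum_powerset_neg_one_pow_card]
    simp only [sdiff_eq_empty_iff_subset]
    by_cases h : s = t
    · simp [h]
    · simp [h, show ¬t ⊆ s from fun hts => h (hst.antisymm hts)]
  · rw [Icc_eq_empty hst, sum_empty, if_neg (fun h => hst h.le)]

theorem sum_powerset_sdiff_neg_one_pow_card (S X : Finset α) (hX : X ⊆ S) :
    ∑ F ∈ X.powerset, (-1 : ℤ) ^ (#S - #F) = if X = ∅ then (-1) ^ #S else 0 := by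
  have hsign (F : Finset α) (hF : F ∈ X.powerset) :
      (-1 : ℤ) ^ (#S - #F) = (-1) ^ #S * (-1) ^ #F := by
    obtain ⟨d, hd⟩ := Nat.exists_eq_add_of_le (card_le_card ((mem_powerset.mp hF).trans hX))
    rw [hd, add_tsub_cancel_left, pow_add, mul_right_comm, ← pow_add, Even.neg_one_pow ⟨_, rfl⟩,
      one_mul]
  rw [sum_congr rfl hsign, ← mul_sum, sum_powerset_neg_one_pow_card, mul_ite, mul_one, mul_zero]

theorem sum_nested_pairs_neg_one_pow (R A U : Finset α) (hU : U ⊆ R) :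
    ∑ q ∈ (R.powerset ×ˢ R.powerset).filter (fun q => q.2 ⊆ q.1 ∧ A ⊆ q.1 ∧ Disjoint q.2 U),
      (-1 : ℤ) ^ (#q.1 - #q.2) = if A = U then (-1) ^ #A else 0 := by
  rw [sum_finset_product _ (R.powerset.filter (A ⊆ ·)) (fun S => (S \ U).powerset) fun q => by
    simp only [mem_filter, mem_product, mem_powerset, subset_sdiff]
    constructor
    · rintro ⟨⟨hR, -⟩, h21, hA, hU⟩
      exact ⟨⟨hR, hA⟩, h21, hU⟩
    · rintro ⟨⟨hR, hA⟩, h21, hU⟩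
      exact ⟨⟨hR, h21.trans hR⟩, h21, hA, hU⟩]
  simp only [sum_powerset_sdiff_neg_one_pow_card _ _ sdiff_subset, sdiff_eq_empty_iff_subset]
  rw [← sum_filter, filter_filter, ← sum_Icc_neg_one_pow_card]
  refine sum_congr (ext fun S => ?_) fun _ _ => rfl
  simp only [mem_filter, mem_powerset, mem_Icc]
  exact ⟨fun h => ⟨h.2.1, h.2.2⟩, fun h => ⟨h.2.trans hU, h⟩⟩

end AlternatingSum

theorem Scoeff_eq_ite {A T T' : Type*} [AddCommGroup A] [LinearOrder T] [LinearOrder T']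
    (τ : A → T) (τ' : A → T') (n : ℕ) (κ : ℕ → A) :
    Scoeff τ τ' n κ =
      if ascentSet τ n κ = unstableCuts τ' n κ then (-1) ^ #(ascentSet τ n κ) else 0 := by
  have hcond : (∀ i ∈ range (n - 1), SCondA τ τ' n κ i ∨ SCondB τ τ' n κ i) ↔
      ascentSet τ n κ = unstableCuts τ' n κ := by
    constructor
    · intro h
      ext i
      simp only [ascentSet, unstableCuts, mem_filter]
      refine and_congr_right fun hi => ?_
      rcases h i hi with ⟨h1, h2⟩ | ⟨h1, h2⟩
      · exact iff_of_true h1 h2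
      · exact iff_of_false (not_le.mpr h1) (not_lt.mpr h2)
    · intro h i hi
      have hiff := Finset.ext_iff.mp h i
      simp only [ascentSet, unstableCuts, mem_filter, hi, true_and] at hiff
      by_cases hle : τ (κ i) ≤ τ (κ (i + 1))
      · exact Or.inl ⟨hle, hiff.mp hle⟩
      · exact Or.inr ⟨not_le.mp hle, not_lt.mp (mt hiff.mpr hle)⟩
  have hA : (range (n - 1)).filter (SCondA τ τ' n κ) = ascentSet τ n κ ∩ unstableCuts τ' n κ := by
    ext i
    simp only [mem_filter, mem_inter, ascentSet, unstableCuts, SCondA]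
    tauto
  rw [Scoeff, hA]
  split_ifs with h1 h2 h2
  · rw [← h2, inter_self]
  · exact absurd (hcond.mp h1) h2
  · exact absurd (hcond.mpr h2) h1
  · rfl

theorem stmt4_general {A T T' : Type*} [AddCommGroup A] [LinearOrder T] [LinearOrder T']
    (τ : A → T) (τt : A → T')
    (n : ℕ) (hn : 1 ≤ n) (κ : Fin n → A) :
    Scoeff τ τt n (toSeq κ) =
      ∑ a ∈ Finset.Icc 1 n, ∑ b ∈ Finset.Icc 1 a,
        ∑ p ∈ Finset.univ.filter
            (fun p : (Fin n → Fin a) × (Fin a → Fin b) =>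
              Surjective p.1 ∧ Monotone p.1 ∧ Surjective p.2 ∧ Monotone p.2 ∧
              (∀ j : Fin a,
                Reversing τ (Finset.univ.filter (fun i : Fin n => p.1 i = j)).card
                  (fiberSeq κ (Finset.univ.filter (fun i : Fin n => p.1 i = j)))) ∧
              Semistable τt b
                (fun k => if h : k < b then
                  ∑ i ∈ Finset.univ.filter (fun i : Fin n => p.2 (p.1 i) = ⟨k, h⟩), κ i
                else 0)),
          ((-1 : ℤ)) ^ (a - b) := by
  set asc := ascentSet τ n (toSeq κ)
  set U := unstableCuts τt n (toSeq κ)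
  have hpairs := sum_monotone_surjective_pairs hn (fun S F => asc ⊆ S ∧ Disjoint F U)
    (fun a b => (-1 : ℤ) ^ (a - b))
  simp only [Nat.add_sub_add_right, sum_nested_pairs_neg_one_pow _ asc U (filter_subset _ _)]
    at hpairs
  rw [Scoeff_eq_ite, ← hpairs]
  refine sum_congr rfl fun a _ => sum_congr rfl fun b _ =>
    sum_congr (filter_congr fun p _ => ?_) fun _ _ => rfl
  refine and_congr_right fun hps => and_congr_right fun hp => and_congr_right fun hqs =>
    and_congr_right fun hq => ?_
  exact (and_congr (forall_reversing_fiberSeq_iff τ κ hp)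
    (semistable_fiberSumSeq_iff τt κ hn (hq.comp hp) (hqs.comp hps))).symm

theorem stmt4 {A T T' : Type*} [AddCommGroup A] [LinearOrder T] [LinearOrder T']
    (C : Set A) (hC : ∀ a b : A, a ∈ C → b ∈ C → a + b ∈ C) (h0 : (0 : A) ∉ C)
    (τ : A → T) (τt : A → T') (hτ : WeakStability C τ) (hτt : WeakStability C τt)
    (n : ℕ) (hn : 1 ≤ n) (κ : Fin n → A) (hκ : ∀ i, κ i ∈ C) :
    Scoeff τ τt n (toSeq κ) =
      ∑ a ∈ Finset.Icc 1 n, ∑ b ∈ Finset.Icc 1 a,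
        ∑ p ∈ Finset.univ.filter
            (fun p : (Fin n → Fin a) × (Fin a → Fin b) =>
              Surjective p.1 ∧ Monotone p.1 ∧ Surjective p.2 ∧ Monotone p.2 ∧
              (∀ j : Fin a,
                Reversing τ (Finset.univ.filter (fun i : Fin n => p.1 i = j)).card
                  (fiberSeq κ (Finset.univ.filter (fun i : Fin n => p.1 i = j)))) ∧
              Semistable τt b
                (fun k => if h : k < b then
                  ∑ i ∈ Finset.univ.filter (fun i : Fin n => p.2 (p.1 i) = ⟨k, h⟩), κ i
                else 0)),
          ((-1 : ℤ)) ^ (a - b) :=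
  stmt4_general τ τt n hn κ
end

section
/- (Unique Harder–Narasimhan type factorization of sequences.) Let τ : C → T be a weak stability function, μ : {1,…,b} → C, and γ : {1,…,b} → {1,…,c} a surjective map with i ≤ j implying γ(i) ≤ γ(j). Then there exist unique m with c ≤ m ≤ b and unique surjective maps φ : {1,…,b} → {1,…,m} and χ : {1,…,m} → {1,…,c}, each nondecreasing (i ≤ j implies φ(i) ≤ φ(j) and χ(i) ≤ χ(j)), with γ = χ∘φ, such that: (1) for each i = 1,…,m the subsequence (μ(k))_{k∈φ⁻¹(i)} is τ-semistable, and (2) setting λ(i) = Σ_{k∈φ⁻¹(i)} μ(k), for each j = 1,…,c the subsequence (λ(i))_{i∈χ⁻¹(j)} is τ-reversing. -/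
open scoped Classical
open Finset Function

/-!
Encode a monotone surjection `φ : Fin b → Fin m` by its cut points `cut φ k = #{i | φ i < k}`,
so that its fibres are the intervals `[cut φ k, cut φ (k + 1))`. The weak seesaw inequality says
that `τ` of the sum over a concatenation of two intervals lies between the values on the parts.

Existence: among the refinements of `γ` into semistable blocks (singletons give one) take one
with the fewest blocks. If two adjacent blocks in one fibre of `γ` violated reversal, the seesaw
would make their union semistable, and merging them would give a refinement with fewer blocks.

Uniqueness: in a factorization of HN type each block `[a, a')` is the longest semistable
interval starting at `a` inside its fibre of `γ`. For a longer interval `[a, y)`, the seesaw and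
the strict decrease of `τ` along the following blocks bound `τ` of `[a', y)` by its value on the
second block, which is below its value on `[a, a')`; so `[a, y)` is not semistable at `a'`.
Hence the cut points are determined one after another.
-/

section Sequence

variable {A T : Type*} [AddCommGroup A] [LinearOrder T]

def blockSum (ν : ℕ → A) (a b : ℕ) : A := ∑ j ∈ Ico a b, ν j

lemma blockSum_add (ν : ℕ → A) {a k b : ℕ} (hak : a ≤ k) (hkb : k ≤ b) :
    blockSum ν a k + blockSum ν k b = blockSum ν a b :=
  sum_Ico_consecutive ν hak hkb

lemma blockSum_mem {C : Set A} (hC : ∀ x y, x ∈ C → y ∈ C → x + y ∈ C) {ν : ℕ → A} {a b : ℕ}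
    (hν : ∀ j, a ≤ j → j < b → ν j ∈ C) (hab : a < b) : blockSum ν a b ∈ C :=
  sum_induction_nonempty _ (· ∈ C) hC (nonempty_Ico.2 hab) fun j hj =>
    hν j (mem_Ico.1 hj).1 (mem_Ico.1 hj).2

lemma blockSum_congr {ν ν' : ℕ → A} {a b : ℕ} (h : ∀ j, a ≤ j → j < b → ν j = ν' j) :
    blockSum ν a b = blockSum ν' a b :=
  sum_congr rfl fun j hj => h j (mem_Ico.1 hj).1 (mem_Ico.1 hj).2

lemma blockSum_add_right (ν : ℕ → A) (a b c : ℕ) :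
    blockSum (fun j => ν (j + c)) a b = blockSum ν (a + c) (b + c) :=
  sum_Ico_add' ν a b c

def SemistableOn (τ : A → T) (ν : ℕ → A) (a b : ℕ) : Prop :=
  ∀ k, a < k → k < b → τ (blockSum ν a k) ≤ τ (blockSum ν k b)

lemma semistableOn_of_le_succ (τ : A → T) (ν : ℕ → A) {a b : ℕ} (h : b ≤ a + 1) :
    SemistableOn τ ν a b :=
  fun _ hak hkb => absurd h (by omega)

lemma semistable_iff_semistableOn {τ : A → T} {κ ν : ℕ → A} {lo hi : ℕ} (hlh : lo ≤ hi)
    (h : ∀ j < hi - lo, κ j = ν (j + lo)) :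
    Semistable τ (hi - lo) κ ↔ SemistableOn τ ν lo hi := by
  have hsum : ∀ a b, b ≤ hi - lo → blockSum κ a b = blockSum ν (a + lo) (b + lo) := fun a b hb =>
    (blockSum_congr fun j _ hj => h j (by omega)).trans (blockSum_add_right ν a b lo)
  have hlow : ∀ i, i + 1 < hi - lo → lowSum κ i = blockSum ν lo (i + 1 + lo) := fun i hi =>
    (congrArg (∑ j ∈ ·, κ j) (range_eq_Ico _)).trans ((hsum 0 _ hi.le).trans (by rw [zero_add]))
  have hhigh : ∀ i, highSum κ i (hi - lo) = blockSum ν (i + 1 + lo) hi := fun i =>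
    (hsum _ _ le_rfl).trans (by rw [Nat.sub_add_cancel hlh])
  constructor
  · intro hss k hk hkhi
    obtain ⟨i, rfl⟩ : ∃ i, k = i + 1 + lo := ⟨k - lo - 1, by omega⟩
    simpa only [hlow i (by omega), hhigh] using hss i (by omega)
  · intro hss i hi
    rw [hlow i hi, hhigh]
    exact hss _ (by omega) (by omega)

lemma reversing_iff {τ : A → T} {κ ν : ℕ → A} {lo hi : ℕ} (h : ∀ j < hi - lo, κ j = ν (j + lo)) :
    Reversing τ (hi - lo) κ ↔ ∀ k, lo ≤ k → k + 1 < hi → τ (ν (k + 1)) < τ (ν k) := by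
  constructor
  · intro hrev k hk hkhi
    obtain ⟨i, rfl⟩ : ∃ i, k = i + lo := ⟨k - lo, by omega⟩
    simpa only [h _ (by omega : i + 1 < hi - lo), h i (by omega), Nat.add_right_comm]
      using hrev i (by omega)
  · intro hrev i hi
    rw [h _ hi, h i (by omega), Nat.add_right_comm]
    exact hrev _ (by omega) (by omega)

def IsSeesawOn (τ : A → T) (ν : ℕ → A) (n : ℕ) : Prop :=
  ∀ a k b, a < k → k < b → b ≤ n →
    τ (blockSum ν a b) ∈ Set.uIcc (τ (blockSum ν a k)) (τ (blockSum ν k b))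

lemma WeakStability.isSeesawOn {C : Set A} {τ : A → T} (hτ : WeakStability C τ)
    (hC : ∀ x y, x ∈ C → y ∈ C → x + y ∈ C) {ν : ℕ → A} {n : ℕ} (hν : ∀ j < n, ν j ∈ C) :
    IsSeesawOn τ ν n := by
  intro a k b hak hkb hbn
  rw [← blockSum_add ν hak.le hkb.le, Set.mem_uIcc]
  exact hτ _ _ (blockSum_mem hC (fun j _ hj => hν j (by omega)) hak)
    (blockSum_mem hC (fun j _ hj => hν j (by omega)) hkb)

namespace IsSeesawOn

variable {τ : A → T} {ν : ℕ → A} {n a k b : ℕ}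

lemma min_le (hs : IsSeesawOn τ ν n) (hak : a < k) (hkb : k < b) (hbn : b ≤ n) :
    min (τ (blockSum ν a k)) (τ (blockSum ν k b)) ≤ τ (blockSum ν a b) :=
  (hs a k b hak hkb hbn).1

lemma le_max (hs : IsSeesawOn τ ν n) (hak : a < k) (hkb : k < b) (hbn : b ≤ n) :
    τ (blockSum ν a b) ≤ max (τ (blockSum ν a k)) (τ (blockSum ν k b)) :=
  (hs a k b hak hkb hbn).2

lemma le_of_semistableOn (hs : IsSeesawOn τ ν n) (hss : SemistableOn τ ν a b)
    (hak : a < k) (hkb : k < b) (hbn : b ≤ n) :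
    τ (blockSum ν a k) ≤ τ (blockSum ν a b) ∧ τ (blockSum ν a b) ≤ τ (blockSum ν k b) := by
  simpa only [Set.uIcc_of_le (hss k hak hkb), Set.mem_Icc] using hs a k b hak hkb hbn

lemma semistableOn_merge (hs : IsSeesawOn τ ν n) (h₁ : SemistableOn τ ν a k)
    (h₂ : SemistableOn τ ν k b) (hle : τ (blockSum ν a k) ≤ τ (blockSum ν k b))
    (hak : a < k) (hkb : k < b) (hbn : b ≤ n) : SemistableOn τ ν a b := by
  intro x hax hxb
  rcases lt_trichotomy x k with hxk | rfl | hkx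
  · calc τ (blockSum ν a x)
        ≤ min (τ (blockSum ν x k)) (τ (blockSum ν k b)) :=
          le_min (h₁ x hax hxk) ((hs.le_of_semistableOn h₁ hax hxk (by omega)).1.trans hle)
      _ ≤ τ (blockSum ν x b) := hs.min_le hxk hkb hbn
  · exact hle
  · calc τ (blockSum ν a x)
        ≤ max (τ (blockSum ν a k)) (τ (blockSum ν k x)) := hs.le_max hak hkx (by omega)
      _ ≤ τ (blockSum ν x b) :=
          max_le (hle.trans (hs.le_of_semistableOn h₂ hkx hxb hbn).2) (h₂ x hkx hxb)

variable {e : ℕ → ℕ} {K y : ℕ}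

lemma blockSum_le_of_decreasing (hs : IsSeesawOn τ ν n) (he : Monotone e) (hkK : k ≤ K)
    (hlt : ∀ j, k ≤ j → j ≤ K → e j < e (j + 1))
    (hss : ∀ j, k ≤ j → j ≤ K → SemistableOn τ ν (e j) (e (j + 1)))
    (hdec : ∀ j, k ≤ j → j < K →
      τ (blockSum ν (e (j + 1)) (e (j + 2))) < τ (blockSum ν (e j) (e (j + 1))))
    (hKy : e K < y) (hyK : y ≤ e (K + 1)) (hn : e (K + 1) ≤ n) :
    τ (blockSum ν (e k) y) ≤ τ (blockSum ν (e k) (e (k + 1))) := by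
  induction hkK using Nat.decreasingInduction with
  | self =>
    rcases hyK.lt_or_eq with hy | rfl
    · exact (hs.le_of_semistableOn (hss K le_rfl le_rfl) hKy hy hn).1
    · exact le_rfl
  | of_succ k hk ih =>
    have ih := ih (fun j hj hjK => hlt j (by omega) hjK) (fun j hj hjK => hss j (by omega) hjK)
      (fun j hj hjK => hdec j (by omega) hjK)
    calc τ (blockSum ν (e k) y)
        ≤ max (τ (blockSum ν (e k) (e (k + 1)))) (τ (blockSum ν (e (k + 1)) y)) :=
          hs.le_max (hlt k le_rfl hk.le) ((he (by omega : k + 1 ≤ K)).trans_lt hKy)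
            (hyK.trans hn)
      _ ≤ τ (blockSum ν (e k) (e (k + 1))) :=
          max_le le_rfl (ih.trans (hdec k le_rfl hk).le)

lemma not_semistableOn (hs : IsSeesawOn τ ν n) (he : Monotone e) (hkK : k < K)
    (hlt : ∀ j, k ≤ j → j ≤ K → e j < e (j + 1))
    (hss : ∀ j, k ≤ j → j ≤ K → SemistableOn τ ν (e j) (e (j + 1)))
    (hdec : ∀ j, k ≤ j → j < K →
      τ (blockSum ν (e (j + 1)) (e (j + 2))) < τ (blockSum ν (e j) (e (j + 1))))
    (hKy : e K < y) (hyK : y ≤ e (K + 1)) (hn : e (K + 1) ≤ n) :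
    ¬ SemistableOn τ ν (e k) y := by
  intro h
  have hcut := h (e (k + 1)) (hlt k le_rfl hkK.le) ((he hkK).trans_lt hKy)
  have htail := hs.blockSum_le_of_decreasing he hkK (fun j hj => hlt j (by omega))
    (fun j hj => hss j (by omega)) (fun j hj => hdec j (by omega)) hKy hyK hn
  exact (hcut.trans htail).not_gt (hdec k le_rfl hkK)

end IsSeesawOn

end Sequence

section Cut

variable {n m : ℕ} {φ : Fin n → Fin m}

def cut (φ : Fin n → Fin m) (k : ℕ) : ℕ := #{i | (φ i : ℕ) < k}

lemma lt_cut_iff (hφ : Monotone φ) {i : Fin n} {k : ℕ} : (i : ℕ) < cut φ k ↔ (φ i : ℕ) < k :=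
  Fin.lt_card_filter_univ_iff_apply_of_imp _ fun _ _ hji hi =>
    (show (φ _ : ℕ) ≤ φ _ from hφ hji).trans_lt hi

lemma cut_le (φ : Fin n → Fin m) (k : ℕ) : cut φ k ≤ n :=
  (card_filter_le _ _).trans_eq (card_fin n)

lemma cut_mono (φ : Fin n → Fin m) : Monotone (cut φ) :=
  fun _ _ hkl => card_le_card <| monotone_filter_right _ fun _ _ hi => hi.trans_le hkl

lemma cut_zero (φ : Fin n → Fin m) : cut φ 0 = 0 := by
  simp [cut]

lemma cut_of_le (φ : Fin n → Fin m) {k : ℕ} (hk : m ≤ k) : cut φ k = n := by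
  simp [cut, fun i => (φ i).2.trans_le hk]

lemma val_eq_iff_cut (hφ : Monotone φ) {i : Fin n} {k : ℕ} :
    (φ i : ℕ) = k ↔ cut φ k ≤ i ∧ (i : ℕ) < cut φ (k + 1) := by
  rw [lt_cut_iff hφ, ← not_lt, lt_cut_iff hφ]
  omega

lemma cut_lt_cut_succ (hφ : Monotone φ) (hφs : Surjective φ) {k : ℕ} (hk : k < m) :
    cut φ k < cut φ (k + 1) := by
  obtain ⟨i, hi⟩ := hφs ⟨k, hk⟩
  have hik := (val_eq_iff_cut hφ).1 (congrArg Fin.val hi)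
  exact hik.1.trans_lt hik.2

lemma cut_lt_iff (hφ : Monotone φ) (hφs : Surjective φ) {k : ℕ} : cut φ k < n ↔ k < m := by
  refine ⟨fun h => not_le.1 fun hk => h.ne (cut_of_le φ hk), fun hk => ?_⟩
  exact (cut_lt_cut_succ hφ hφs hk).trans_le (cut_le φ _)

lemma card_eq_of_cut_eq {m' : ℕ} {φ' : Fin n → Fin m'} (hφ : Monotone φ) (hφs : Surjective φ)
    (hφ' : Monotone φ') (hφ's : Surjective φ') (h : cut φ = cut φ') : m = m' :=
  eq_of_forall_lt_iff fun k => by rw [← cut_lt_iff hφ hφs, ← cut_lt_iff hφ' hφ's, h]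

lemma val_eq_of_cut_eq {m' : ℕ} {φ' : Fin n → Fin m'} (hφ : Monotone φ) (hφ' : Monotone φ')
    (h : cut φ = cut φ') (i : Fin n) : (φ i : ℕ) = φ' i :=
  eq_of_forall_gt_iff fun k => by rw [← lt_cut_iff hφ, ← lt_cut_iff hφ', h]

lemma cut_id (k : ℕ) : cut (id : Fin n → Fin n) k = min n k :=
  Fin.card_filter_val_lt

lemma Fin.val_predAbove {m : ℕ} (p : Fin m) (x : Fin (m + 1)) :
    (p.predAbove x : ℕ) = if (p : ℕ) < x then (x : ℕ) - 1 else x := by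
  rcases lt_or_ge (p : ℕ) x with h | h
  · rw [Fin.predAbove_of_castSucc_lt p x h, if_pos h, Fin.val_pred]
  · rw [Fin.predAbove_of_le_castSucc p x h, if_neg h.not_gt, Fin.coe_castPred]

lemma cut_predAbove {n m : ℕ} (φ : Fin n → Fin (m + 1)) (p : Fin m) (j : ℕ) :
    cut (p.predAbove ∘ φ) j = cut φ (if j ≤ p then j else j + 1) := by
  unfold cut
  congr 1
  refine filter_congr fun i _ => ?_
  simp only [comp_apply, Fin.val_predAbove]
  split_ifs <;> omega

end Cut

section Fiber

variable {A T : Type*} [AddCommGroup A] [LinearOrder T] {τ : A → T} {n m : ℕ}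
  {s : Finset (Fin n)} {lo hi : ℕ}

lemma map_valEmbedding_eq_Ico (hs : ∀ i : Fin n, i ∈ s ↔ lo ≤ i ∧ (i : ℕ) < hi) (hhi : hi ≤ n) :
    s.map Fin.valEmbedding = Ico lo hi := by
  ext j
  simp only [mem_map, Fin.valEmbedding_apply, hs, mem_Ico]
  exact ⟨fun ⟨i, hi, hij⟩ => hij ▸ hi, fun hj => ⟨⟨j, by omega⟩, hj, rfl⟩⟩

lemma card_eq_of_mem_iff (hs : ∀ i : Fin n, i ∈ s ↔ lo ≤ i ∧ (i : ℕ) < hi) (hhi : hi ≤ n) :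
    #s = hi - lo := by
  rw [← card_map Fin.valEmbedding, map_valEmbedding_eq_Ico hs hhi, Nat.card_Ico]

lemma sum_eq_blockSum (κ : Fin n → A) (hs : ∀ i : Fin n, i ∈ s ↔ lo ≤ i ∧ (i : ℕ) < hi)
    (hhi : hi ≤ n) : ∑ i ∈ s, κ i = blockSum (toSeq κ) lo hi := by
  rw [blockSum, ← map_valEmbedding_eq_Ico hs hhi, sum_map]
  exact sum_congr rfl fun i _ => by simp [toSeq]

lemma fiberSeq_eq_toSeq (κ : Fin n → A) (hs : ∀ i : Fin n, i ∈ s ↔ lo ≤ i ∧ (i : ℕ) < hi)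
    (hhi : hi ≤ n) {j : ℕ} (hj : j < hi - lo) : fiberSeq κ s j = toSeq κ (j + lo) := by
  have hcard := card_eq_of_mem_iff hs hhi
  have hshift : (fun t : Fin #s => (⟨t + lo, by omega⟩ : Fin n)) = s.orderEmbOfFin rfl :=
    orderEmbOfFin_unique rfl (fun t => (hs _).2 ⟨by simp, by simp; omega⟩)
      fun t t' htt' => by simpa using htt'
  rw [fiberSeq, dif_pos (by omega), toSeq, dif_pos (by omega), coe_orderIsoOfFin_apply,
    ← hshift]

lemma mem_fiber_iff {φ : Fin n → Fin m} (hφ : Monotone φ) (k : Fin m) (i : Fin n) :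
    i ∈ ({i | φ i = k} : Finset (Fin n)) ↔ cut φ k ≤ i ∧ (i : ℕ) < cut φ (k + 1) := by
  rw [mem_filter, Fin.ext_iff, val_eq_iff_cut hφ]
  simp

lemma sum_fiber {φ : Fin n → Fin m} (hφ : Monotone φ) (κ : Fin n → A) (k : Fin m) :
    ∑ i ∈ {i | φ i = k}, κ i = blockSum (toSeq κ) (cut φ k) (cut φ (k + 1)) :=
  sum_eq_blockSum κ (mem_fiber_iff hφ k) (cut_le φ _)

lemma semistable_fiber_iff {φ : Fin n → Fin m} (hφ : Monotone φ) (κ : Fin n → A) (k : Fin m) :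
    Semistable τ #{i | φ i = k} (fiberSeq κ {i | φ i = k}) ↔
      SemistableOn τ (toSeq κ) (cut φ k) (cut φ (k + 1)) := by
  rw [card_eq_of_mem_iff (mem_fiber_iff hφ k) (cut_le φ _)]
  exact semistable_iff_semistableOn (cut_mono φ (Nat.le_succ _))
    fun j hj => fiberSeq_eq_toSeq κ (mem_fiber_iff hφ k) (cut_le φ _) hj

lemma reversing_fibers_iff {c : ℕ} {χ : Fin m → Fin c} (hχ : Monotone χ) (κ : Fin m → A) :
    (∀ j, Reversing τ #{k | χ k = j} (fiberSeq κ {k | χ k = j})) ↔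
      ∀ k (hk : k + 1 < m), χ ⟨k, by omega⟩ = χ ⟨k + 1, hk⟩ →
        τ (κ ⟨k + 1, hk⟩) < τ (κ ⟨k, by omega⟩) := by
  have hrev : ∀ j, Reversing τ #{k | χ k = j} (fiberSeq κ {k | χ k = j}) ↔
      ∀ k, cut χ j ≤ k → k + 1 < cut χ (j + 1) → τ (toSeq κ (k + 1)) < τ (toSeq κ k) := fun j => by
    rw [card_eq_of_mem_iff (mem_fiber_iff hχ j) (cut_le χ _)]
    exact reversing_iff fun i hi => fiberSeq_eq_toSeq κ (mem_fiber_iff hχ j) (cut_le χ _) hi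
  simp only [hrev]
  constructor
  · intro h k hk hχk
    have hk₁ := (val_eq_iff_cut hχ).1 (congrArg Fin.val hχk)
    have hk₂ := (val_eq_iff_cut hχ).1 (rfl : (χ ⟨k + 1, hk⟩ : ℕ) = χ ⟨k + 1, hk⟩)
    simpa [toSeq, hk, show k < m by omega] using h (χ ⟨k + 1, hk⟩) k hk₁.1 hk₂.2
  · intro h j k hjk hkj
    have hk : k + 1 < m := hkj.trans_le (cut_le χ _)
    have hk₁ := (val_eq_iff_cut hχ (i := ⟨k, by omega⟩)).2 ⟨hjk, (Nat.lt_succ_self k).trans hkj⟩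
    have hk₂ := (val_eq_iff_cut hχ (i := ⟨k + 1, hk⟩)).2 ⟨hjk.trans k.le_succ, hkj⟩
    simpa [toSeq, hk, show k < m by omega] using h k hk (Fin.ext (hk₁.trans hk₂.symm))

end Fiber

lemma Monotone.of_comp_surjective {α β δ : Type*} [LinearOrder α] [PartialOrder β] [Preorder δ]
    {φ : α → β} {χ : β → δ} (hφ : Monotone φ) (hφs : Surjective φ) (h : Monotone (χ ∘ φ)) :
    Monotone χ := by
  intro k k' hkk'
  obtain ⟨i, rfl⟩ := hφs k
  obtain ⟨i', rfl⟩ := hφs k'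
  rcases le_total i i' with hii' | hi'i
  · exact h hii'
  · rw [le_antisymm hkk' (hφ hi'i)]

section HN

variable {A T : Type*} [AddCommGroup A] [LinearOrder T] {τ : A → T} {b c m : ℕ}
  {μ : Fin b → A} {γ : Fin b → Fin c}

structure IsSemistableRefinement (τ : A → T) (μ : Fin b → A) (γ : Fin b → Fin c)
    (φ : Fin b → Fin m) (χ : Fin m → Fin c) : Prop where
  monotone : Monotone φ
  surjective : Surjective φ
  comp_eq : ∀ i, γ i = χ (φ i)
  semistableOn : ∀ k < m, SemistableOn τ (toSeq μ) (cut φ k) (cut φ (k + 1))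

structure IsHNFactorization (τ : A → T) (μ : Fin b → A) (γ : Fin b → Fin c)
    (φ : Fin b → Fin m) (χ : Fin m → Fin c) : Prop
    extends IsSemistableRefinement τ μ γ φ χ where
  monotone_right : Monotone χ
  surjective_right : Surjective χ
  reversing : ∀ k (hk : k + 1 < m), χ ⟨k, by omega⟩ = χ ⟨k + 1, hk⟩ →
    τ (blockSum (toSeq μ) (cut φ (k + 1)) (cut φ (k + 2))) <
      τ (blockSum (toSeq μ) (cut φ k) (cut φ (k + 1)))

namespace IsSemistableRefinement

variable {φ : Fin b → Fin m} {χ : Fin m → Fin c}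

lemma apply_eq (h : IsSemistableRefinement τ μ γ φ χ) {k : ℕ} (hk : k < m) {i : Fin b}
    (hi₁ : cut φ k ≤ i) (hi₂ : (i : ℕ) < cut φ (k + 1)) : γ i = χ ⟨k, hk⟩ :=
  (h.comp_eq i).trans (congrArg χ (Fin.ext ((val_eq_iff_cut h.monotone).2 ⟨hi₁, hi₂⟩)))

lemma merge {φ : Fin b → Fin (m + 1)} {χ : Fin (m + 1) → Fin c}
    (h : IsSemistableRefinement τ μ γ φ χ) (hs : IsSeesawOn τ (toSeq μ) b) (p : Fin m)
    (hχ : χ p.castSucc = χ p.succ)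
    (hle : τ (blockSum (toSeq μ) (cut φ p) (cut φ (p + 1))) ≤
      τ (blockSum (toSeq μ) (cut φ (p + 1)) (cut φ (p + 2)))) :
    IsSemistableRefinement τ μ γ (p.predAbove ∘ φ) (χ ∘ p.castSucc.succAbove) where
  monotone := (Fin.predAbove_right_monotone p).comp h.monotone
  surjective := (Fin.predAbove_surjective p).comp h.surjective
  comp_eq i := by
    rw [h.comp_eq i, comp_apply, comp_apply]
    by_cases hi : φ i = p.castSucc
    · rw [hi, Fin.predAbove_castSucc_self, Fin.succAbove_castSucc_self, hχ]
    · rw [Fin.succAbove_predAbove hi]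
  semistableOn j hj := by
    rw [cut_predAbove, cut_predAbove]
    rcases lt_trichotomy j p with hjp | rfl | hpj
    · rw [if_pos hjp.le, if_pos (Nat.succ_le_of_lt hjp)]
      exact h.semistableOn j (by omega)
    · rw [if_pos le_rfl, if_neg (by omega)]
      exact hs.semistableOn_merge (h.semistableOn _ (by omega)) (h.semistableOn _ (by omega)) hle
        (cut_lt_cut_succ h.monotone h.surjective (by omega))
        (cut_lt_cut_succ h.monotone h.surjective (by omega)) (cut_le φ _)
    · rw [if_neg (by omega), if_neg (by omega)]
      exact h.semistableOn (j + 1) (by omega)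

end IsSemistableRefinement

lemma exists_isHNFactorization (hs : IsSeesawOn τ (toSeq μ) b) (hγs : Surjective γ)
    (hγm : Monotone γ) :
    ∃ (m : ℕ) (φ : Fin b → Fin m) (χ : Fin m → Fin c), IsHNFactorization τ μ γ φ χ := by
  have hP : ∃ m, ∃ (φ : Fin b → Fin m) (χ : Fin m → Fin c), IsSemistableRefinement τ μ γ φ χ :=
    ⟨b, id, γ, monotone_id, surjective_id, fun _ => rfl,
      fun k _ => semistableOn_of_le_succ _ _ (by simp only [cut_id]; omega)⟩
  obtain ⟨m, ⟨φ, χ, h⟩, hmin⟩ : ∃ m, (∃ (φ : Fin b → Fin m) (χ : Fin m → Fin c),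
      IsSemistableRefinement τ μ γ φ χ) ∧ ∀ m' < m, ¬ ∃ (φ : Fin b → Fin m')
        (χ : Fin m' → Fin c), IsSemistableRefinement τ μ γ φ χ :=
    ⟨_, Nat.find_spec hP, fun _ => Nat.find_min hP⟩
  have hcomp : γ = χ ∘ φ := funext h.comp_eq
  refine ⟨m, φ, χ, h, h.monotone.of_comp_surjective h.surjective (hcomp ▸ hγm),
    .of_comp (hcomp ▸ hγs), fun k hk hχ => ?_⟩
  by_contra! hle
  obtain ⟨m, rfl⟩ : ∃ m', m = m' + 1 := ⟨m - 1, by omega⟩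
  exact hmin m (by omega) ⟨_, _, h.merge hs ⟨k, by omega⟩ hχ hle⟩

namespace IsHNFactorization

variable {φ : Fin b → Fin m} {χ : Fin m → Fin c}

lemma le_cut_succ_of_semistableOn (h : IsHNFactorization τ μ γ φ χ) (hs : IsSeesawOn τ (toSeq μ) b) {k y : ℕ}
    (hk : k < m) (hky : cut φ k < y) (hyb : y ≤ b)
    (hγ : γ ⟨y - 1, by omega⟩ = γ ⟨cut φ k, by omega⟩)
    (hss : SemistableOn τ (toSeq μ) (cut φ k) y) : y ≤ cut φ (k + 1) := by
  by_contra! hy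
  set i : Fin b := ⟨y - 1, by omega⟩
  have hi : (i : ℕ) = y - 1 := rfl
  set K : ℕ := (φ i : ℕ) with hK
  have hKm : K < m := (φ i).2
  have hyK := (val_eq_iff_cut h.monotone).1 hK.symm
  have hkK : k < K := not_le.1 fun hKk => by
    have := (lt_cut_iff h.monotone (i := i) (k := k + 1)).2 (by omega)
    omega
  have hχ : ∀ j (hkj : k ≤ j) (hjK : j ≤ K), χ ⟨j, by omega⟩ = χ ⟨k, hk⟩ := by
    have hχK : χ ⟨K, hKm⟩ = χ ⟨k, hk⟩ := by
      rw [← h.apply_eq hKm hyK.1 hyK.2, hγ,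
        h.apply_eq hk le_rfl (cut_lt_cut_succ h.monotone h.surjective hk)]
    exact fun j hkj hjK => le_antisymm (hχK ▸ h.monotone_right (Fin.mk_le_mk.2 hjK))
      (h.monotone_right (Fin.mk_le_mk.2 hkj))
  refine hs.not_semistableOn (cut_mono φ) hkK
    (fun j _ hjK => cut_lt_cut_succ h.monotone h.surjective (by omega))
    (fun j _ hjK => h.semistableOn j (by omega))
    (fun j hkj hjK => h.reversing j (by omega)
      ((hχ j hkj hjK.le).trans (hχ (j + 1) (by omega) hjK).symm))
    (by omega) (by omega) (cut_le φ _) hss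

lemma cut_succ_le_of_cut_eq {m' : ℕ} {φ' : Fin b → Fin m'} {χ' : Fin m' → Fin c}
    (h : IsHNFactorization τ μ γ φ χ) (h' : IsHNFactorization τ μ γ φ' χ')
    (hs : IsSeesawOn τ (toSeq μ) b) {k : ℕ} (hk : k < m) (hk' : k < m')
    (hcut : cut φ k = cut φ' k) : cut φ' (k + 1) ≤ cut φ (k + 1) := by
  have hlt := cut_lt_cut_succ h'.monotone h'.surjective hk'
  refine h.le_cut_succ_of_semistableOn hs hk (hcut ▸ hlt) (cut_le φ' _) ?_
    (hcut ▸ h'.semistableOn k hk')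
  rw [h'.apply_eq hk' (by simp only; omega) (by simp only; omega),
    h'.apply_eq hk' (by simp only [hcut, le_refl]) (by simp only [hcut, hlt])]

lemma cut_eq {m' : ℕ} {φ' : Fin b → Fin m'} {χ' : Fin m' → Fin c}
    (h : IsHNFactorization τ μ γ φ χ) (h' : IsHNFactorization τ μ γ φ' χ')
    (hs : IsSeesawOn τ (toSeq μ) b) : cut φ = cut φ' := by
  funext k
  induction k with
  | zero => rw [cut_zero, cut_zero]
  | succ k ih =>
    by_cases hk : k < m ∧ k < m'
    · exact le_antisymm (h'.cut_succ_le_of_cut_eq h hs hk.2 hk.1 ih.symm)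
        (h.cut_succ_le_of_cut_eq h' hs hk.1 hk.2 ih)
    · have hb : cut φ k = b := by
        rcases not_and_or.1 hk with hk | hk
        · exact cut_of_le φ (not_lt.1 hk)
        · exact ih.trans (cut_of_le φ' (not_lt.1 hk))
      rw [le_antisymm (cut_le φ _) (hb.symm.trans_le (cut_mono φ k.le_succ)),
        le_antisymm (cut_le φ' _) ((hb.symm.trans ih).trans_le (cut_mono φ' k.le_succ))]

lemma eq_of_isHNFactorization (h : IsHNFactorization τ μ γ φ χ) (hs : IsSeesawOn τ (toSeq μ) b)
    (p : Σ m, (Fin b → Fin m) × (Fin m → Fin c)) (hp : IsHNFactorization τ μ γ p.2.1 p.2.2) :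
    p = ⟨m, φ, χ⟩ := by
  obtain ⟨m', φ', χ'⟩ := p
  dsimp only at hp
  have hcut := hp.cut_eq h hs
  obtain rfl := card_eq_of_cut_eq hp.monotone hp.surjective h.monotone h.surjective hcut
  obtain rfl : φ' = φ := funext fun i => Fin.ext (val_eq_of_cut_eq hp.monotone h.monotone hcut i)
  obtain rfl : χ' = χ := funext fun k => by
    obtain ⟨i, rfl⟩ := h.surjective k
    rw [← hp.comp_eq, h.comp_eq]
  rfl

end IsHNFactorization

lemma isHNFactorization_iff (p : Σ m, (Fin b → Fin m) × (Fin m → Fin c)) :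
    (c ≤ p.1 ∧ p.1 ≤ b ∧
      Surjective p.2.1 ∧ Monotone p.2.1 ∧ Surjective p.2.2 ∧ Monotone p.2.2 ∧
      (∀ i : Fin b, γ i = p.2.2 (p.2.1 i)) ∧
      (∀ k : Fin p.1, Semistable τ #{i | p.2.1 i = k} (fiberSeq μ {i | p.2.1 i = k})) ∧
      (∀ j : Fin c, Reversing τ #{k | p.2.2 k = j}
        (fiberSeq (fun k => ∑ i ∈ {i | p.2.1 i = k}, μ i) {k | p.2.2 k = j}))) ↔
    IsHNFactorization τ μ γ p.2.1 p.2.2 := by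
  obtain ⟨m, φ, χ⟩ := p
  constructor
  · rintro ⟨-, -, hφs, hφm, hχs, hχm, hcomp, hss, hrev⟩
    refine ⟨⟨hφm, hφs, hcomp, fun k hk => (semistable_fiber_iff hφm μ ⟨k, hk⟩).1 (hss _)⟩,
      hχm, hχs, fun k hk hχ => ?_⟩
    simpa only [sum_fiber hφm] using (reversing_fibers_iff hχm _).1 hrev k hk hχ
  · intro h
    refine ⟨?_, ?_, h.surjective, h.monotone, h.surjective_right, h.monotone_right, h.comp_eq,
      fun k => (semistable_fiber_iff h.monotone μ k).2 (h.semistableOn k k.2),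
      (reversing_fibers_iff h.monotone_right _).2 fun k hk hχ => ?_⟩
    · simpa using Fintype.card_le_of_surjective _ h.surjective_right
    · simpa using Fintype.card_le_of_surjective _ h.surjective
    · simpa only [sum_fiber h.monotone] using h.reversing k hk hχ

end HN

theorem stmt5_general {A T : Type*} [AddCommGroup A] [LinearOrder T]
    (C : Set A) (hC : ∀ a b : A, a ∈ C → b ∈ C → a + b ∈ C)
    (τ : A → T) (hτ : WeakStability C τ)
    (b c : ℕ)
    (μ : Fin b → A) (hμ : ∀ i, μ i ∈ C)
    (γ : Fin b → Fin c) (hγs : Surjective γ) (hγm : Monotone γ) :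
    ∃! p : Σ m : ℕ, (Fin b → Fin m) × (Fin m → Fin c),
      c ≤ p.1 ∧ p.1 ≤ b ∧
      Surjective p.2.1 ∧ Monotone p.2.1 ∧ Surjective p.2.2 ∧ Monotone p.2.2 ∧
      (∀ i : Fin b, γ i = p.2.2 (p.2.1 i)) ∧
      (∀ k : Fin p.1,
        Semistable τ (Finset.univ.filter (fun i : Fin b => p.2.1 i = k)).card
          (fiberSeq μ (Finset.univ.filter (fun i : Fin b => p.2.1 i = k)))) ∧
      (∀ j : Fin c,
        Reversing τ (Finset.univ.filter (fun k : Fin p.1 => p.2.2 k = j)).card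
          (fiberSeq
            (fun k : Fin p.1 => ∑ i ∈ Finset.univ.filter (fun i : Fin b => p.2.1 i = k), μ i)
            (Finset.univ.filter (fun k : Fin p.1 => p.2.2 k = j)))) := by
  have hs : IsSeesawOn τ (toSeq μ) b :=
    hτ.isSeesawOn hC fun j hj => by simpa [toSeq, hj] using hμ ⟨j, hj⟩
  obtain ⟨m, φ, χ, h⟩ := exists_isHNFactorization hs hγs hγm
  exact ⟨⟨m, φ, χ⟩, (isHNFactorization_iff _).2 h,
    fun p hp => h.eq_of_isHNFactorization hs p ((isHNFactorization_iff p).1 hp)⟩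

theorem stmt5 {A T : Type*} [AddCommGroup A] [LinearOrder T]
    (C : Set A) (hC : ∀ a b : A, a ∈ C → b ∈ C → a + b ∈ C) (h0 : (0 : A) ∉ C)
    (τ : A → T) (hτ : WeakStability C τ)
    (b c : ℕ) (hb : 1 ≤ b) (hc : 1 ≤ c)
    (μ : Fin b → A) (hμ : ∀ i, μ i ∈ C)
    (γ : Fin b → Fin c) (hγs : Surjective γ) (hγm : Monotone γ) :
    ∃! p : Σ m : ℕ, (Fin b → Fin m) × (Fin m → Fin c),
      c ≤ p.1 ∧ p.1 ≤ b ∧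
      Surjective p.2.1 ∧ Monotone p.2.1 ∧ Surjective p.2.2 ∧ Monotone p.2.2 ∧
      (∀ i : Fin b, γ i = p.2.2 (p.2.1 i)) ∧
      (∀ k : Fin p.1,
        Semistable τ (Finset.univ.filter (fun i : Fin b => p.2.1 i = k)).card
          (fiberSeq μ (Finset.univ.filter (fun i : Fin b => p.2.1 i = k)))) ∧
      (∀ j : Fin c,
        Reversing τ (Finset.univ.filter (fun k : Fin p.1 => p.2.2 k = j)).card
          (fiberSeq
            (fun k : Fin p.1 => ∑ i ∈ Finset.univ.filter (fun i : Fin b => p.2.1 i = k), μ i)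
            (Finset.univ.filter (fun k : Fin p.1 => p.2.2 k = j)))) :=
  stmt5_general C hC τ hτ b c μ hμ γ hγs hγm
end

section
/- Fix integers g, n, d, m with n > 0. Then the set of tuples (k, (n₁,…,n_k), (d₁,…,d_k)) where k ≥ 1, the n_i are positive integers with n₁ + ⋯ + n_k = n, the d_i are integers with d₁ + ⋯ + d_k = d, the slopes are strictly decreasing in the sense that d_i·n_j > d_j·n_i for all 1 ≤ i < j ≤ k, and (g−1)n² − (g−1)·Σ_{1≤i<j≤k} n_i n_j + Σ_{1≤i<j≤k} (n_i d_j − d_i n_j) ≥ m, is finite. (Note that the strict slope condition implies n_i d_j − d_i n_j < 0 for all i < j.) -/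
open scoped Classical
open Finset Function

lemma auxSumLeMem {α : Type*} [DecidableEq α] {s : Finset α} {f : α → ℤ} {i : α}
    (hi : i ∈ s) (h : ∀ j ∈ s, f j ≤ 0) : ∑ j ∈ s, f j ≤ f i := by
  rw [← Finset.sum_erase_add s f hi]
  have : ∑ j ∈ s.erase i, f j ≤ 0 :=
    Finset.sum_nonpos fun j hj => h j (Finset.mem_of_mem_erase hj)
  linarith

theorem stmt14 (g n d m : ℤ) (hn : 0 < n) :
    {p : Σ k : ℕ, (Fin k → ℤ) × (Fin k → ℤ) |
      1 ≤ p.1 ∧ (∀ i, 0 < p.2.1 i) ∧ (∑ i, p.2.1 i) = n ∧ (∑ i, p.2.2 i) = d ∧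
      (∀ i j : Fin p.1, i < j → p.2.2 j * p.2.1 i < p.2.2 i * p.2.1 j) ∧
      m ≤ (g - 1) * n ^ 2
            - (g - 1) *
              (∑ i : Fin p.1, ∑ j ∈ Finset.univ.filter (fun j : Fin p.1 => i < j),
                p.2.1 i * p.2.1 j)
            + (∑ i : Fin p.1, ∑ j ∈ Finset.univ.filter (fun j : Fin p.1 => i < j),
                (p.2.1 i * p.2.2 j - p.2.2 i * p.2.1 j))}.Finite := by
  classical
  set D : ℤ := |m - (g-1)*n^2| + |g-1| * n^2 with hDdef
  set C : ℤ := |d| + D + n with hCdef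
  have hD0 : 0 ≤ D := by simp only [hDdef]; positivity
  -- finite superset
  have hT : {p : Σ k : ℕ, (Fin k → ℤ) × (Fin k → ℤ) |
      p.1 ≤ n.toNat ∧ ∀ i, |p.2.1 i| ≤ C ∧ |p.2.2 i| ≤ C}.Finite := by
    have hsub : {p : Σ k : ℕ, (Fin k → ℤ) × (Fin k → ℤ) |
        p.1 ≤ n.toNat ∧ ∀ i, |p.2.1 i| ≤ C ∧ |p.2.2 i| ≤ C} ⊆
        ⋃ k ∈ Set.Iic n.toNat, Sigma.mk k ''
          {q : (Fin k → ℤ) × (Fin k → ℤ) | ∀ i, |q.1 i| ≤ C ∧ |q.2 i| ≤ C} := by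
      rintro ⟨k, q⟩ ⟨hk, hq⟩
      exact Set.mem_biUnion hk ⟨q, hq, rfl⟩
    refine Set.Finite.subset
      (Set.Finite.biUnion (Set.finite_Iic _) fun k _ => Set.Finite.image _ ?_) hsub
    have h2 : {q : (Fin k → ℤ) × (Fin k → ℤ) | ∀ i, |q.1 i| ≤ C ∧ |q.2 i| ≤ C} ⊆
        (Set.pi Set.univ fun _ : Fin k => Set.Icc (-C) C) ×ˢ
        (Set.pi Set.univ fun _ : Fin k => Set.Icc (-C) C) := by
      rintro ⟨f1, f2⟩ hq
      refine ⟨fun i _ => ?_, fun i _ => ?_⟩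
      · exact Set.mem_Icc.2 (abs_le.1 (hq i).1)
      · exact Set.mem_Icc.2 (abs_le.1 (hq i).2)
    exact Set.Finite.subset
      ((Set.Finite.pi fun _ => Set.finite_Icc _ _).prod
        (Set.Finite.pi fun _ => Set.finite_Icc _ _)) h2
  refine Set.Finite.subset hT ?_
  rintro ⟨k, ns, ds⟩ ⟨hk1, hpos, hsn, hsd, hslope, hdim⟩
  simp only [Set.mem_setOf_eq]
  -- basic bounds
  have hkn : (k : ℤ) ≤ n := by
    calc (k : ℤ) = ∑ _i : Fin k, (1 : ℤ) := by simp
    _ ≤ ∑ i, ns i := Finset.sum_le_sum fun i _ => hpos i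
    _ = n := hsn
  have hnsle : ∀ i, ns i ≤ n := by
    intro i
    calc ns i ≤ ∑ j, ns j :=
      Finset.single_le_sum (fun j _ => (hpos j).le) (Finset.mem_univ i)
    _ = n := hsn
  set c : Fin k → Fin k → ℤ := fun i j => ns i * ds j - ds i * ns j with hcdef
  have hcneg : ∀ i j : Fin k, i < j → c i j ≤ -1 := by
    intro i j hij
    have h := hslope i j hij
    have : c i j < 0 := by simp only [hcdef]; nlinarith [mul_comm (ds j) (ns i)]
    omega
  -- lower bound on the double sum
  set Q : ℤ := ∑ i : Fin k, ∑ j ∈ Finset.univ.filter (fun j : Fin k => i < j), c i j with hQdef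
  have hQlb : -D ≤ Q := by
    set P : ℤ := ∑ i : Fin k, ∑ j ∈ Finset.univ.filter (fun j : Fin k => i < j),
      ns i * ns j with hPdef
    have hP0 : 0 ≤ P := Finset.sum_nonneg fun i _ => Finset.sum_nonneg fun j _ =>
      mul_nonneg (hpos i).le (hpos j).le
    have hPn : P ≤ n ^ 2 := by
      have h1 : P ≤ ∑ i : Fin k, ∑ j : Fin k, ns i * ns j := by
        refine Finset.sum_le_sum fun i _ => ?_
        refine Finset.sum_le_sum_of_subset_of_nonneg (Finset.filter_subset _ _)
          fun j _ _ => mul_nonneg (hpos i).le (hpos j).le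
      have h2 : ∑ i : Fin k, ∑ j : Fin k, ns i * ns j = n ^ 2 := by
        rw [← Finset.sum_mul_sum, hsn]; ring
      linarith
    have habs : |(g - 1) * P| ≤ |g - 1| * n ^ 2 := by
      rw [abs_mul]
      have : |P| = P := abs_of_nonneg hP0
      nlinarith [abs_nonneg (g - 1)]
    have h3 := neg_abs_le ((g - 1) * P)
    have h4 := neg_abs_le (m - (g-1)*n^2)
    linarith [hQdef, hDdef, hPdef, hdim, habs, h3, h4]
  have hclb : ∀ i j : Fin k, i < j → -D ≤ c i j := by
    intro i j hij
    have hinner : ∀ i' : Fin k,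
        (∑ j' ∈ Finset.univ.filter (fun j' : Fin k => i' < j'), c i' j') ≤ 0 := by
      intro i'
      exact Finset.sum_nonpos fun j' hj' => by
        have := (Finset.mem_filter.1 hj').2
        linarith [hcneg i' j' this]
    have h1 : Q ≤ ∑ j' ∈ Finset.univ.filter (fun j' : Fin k => i < j'), c i j' :=
      auxSumLeMem (Finset.mem_univ i) fun i' _ => hinner i'
    have h2 : (∑ j' ∈ Finset.univ.filter (fun j' : Fin k => i < j'), c i j') ≤ c i j :=
      auxSumLeMem (Finset.mem_filter.2 ⟨Finset.mem_univ j, hij⟩)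
        fun j' hj' => by
          have := (Finset.mem_filter.1 hj').2
          linarith [hcneg i j' this]
    linarith
  have hcabs : ∀ i j : Fin k, |c i j| ≤ D := by
    intro i j
    rcases lt_trichotomy i j with h | h | h
    · have := hclb i j h; have := hcneg i j h
      rw [abs_le]; constructor <;> linarith
    · subst h
      have hz : c i i = 0 := by simp only [hcdef]; ring
      rw [hz, abs_zero]; exact hD0
    · have h1 := hclb j i h; have h2 := hcneg j i h
      have : c i j = -(c j i) := by simp only [hcdef]; ring
      rw [this, abs_neg, abs_le]; constructor <;> linarith
  -- bound on each ds j
  have hds : ∀ j : Fin k, |ds j| ≤ |d| + D := by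
    intro j
    have hident : ∑ i : Fin k, c i j = n * ds j - d * ns j := by
      simp only [hcdef]
      rw [Finset.sum_sub_distrib, ← Finset.sum_mul, ← Finset.sum_mul, hsn, hsd]
    have h1 : |n * ds j - d * ns j| ≤ (k : ℤ) * D := by
      rw [← hident]
      calc |∑ i : Fin k, c i j| ≤ ∑ i : Fin k, |c i j| := Finset.abs_sum_le_sum_abs _ _
      _ ≤ ∑ _i : Fin k, D := Finset.sum_le_sum fun i _ => hcabs i j
      _ = (k : ℤ) * D := by simp [mul_comm]
    have h2 : |d * ns j| ≤ |d| * n := by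
      rw [abs_mul]
      have h3 : |ns j| ≤ n := by
        rw [abs_of_nonneg (hpos j).le]; exact hnsle j
      nlinarith [abs_nonneg d, abs_nonneg (ns j)]
    have h4 : (k : ℤ) * D ≤ n * D := by nlinarith
    have h5 : |n * ds j| ≤ n * (|d| + D) := by
      calc |n * ds j| = |n * ds j - d * ns j + d * ns j| := by ring_nf
      _ ≤ |n * ds j - d * ns j| + |d * ns j| := abs_add_le _ _
      _ ≤ (k : ℤ) * D + |d| * n := by linarith
      _ ≤ n * (|d| + D) := by linarith
    have h6 : |n * ds j| = n * |ds j| := by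
      rw [abs_mul, abs_of_pos hn]
    nlinarith [abs_nonneg (ds j)]
  refine ⟨by omega, fun i => ⟨?_, ?_⟩⟩
  · rw [abs_of_pos (hpos i)]
    linarith [hnsle i, abs_nonneg d, hD0, hCdef]
  · linarith [hds i, hCdef, hn]
end

section
/- Let τ : C → T, τ̂ : C → T̂, τ̃ : C → T̃ be weak stability functions, (I,≼) a finite poset with κ : I → C, and φ : I → K a surjection making (I,≼,K,φ) dominant. Define T(I,≼,κ,K,φ,τ,τ̃) = Π_{k∈K} S(φ⁻¹({k}), ≼|_{φ⁻¹({k})}, κ|_{φ⁻¹({k})}, τ, τ̃). Then T(I,≼,κ,K,φ,τ,τ) = 1 if φ is a bijection and 0 otherwise. -/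
open scoped Classical
open Finset Function

lemma sum_mem_C {A : Type*} [AddCommGroup A] {C : Set A}
    (hC : ∀ a b : A, a ∈ C → b ∈ C → a + b ∈ C) (f : ℕ → A) :
    ∀ (s : Finset ℕ), s.Nonempty → (∀ j ∈ s, f j ∈ C) → ∑ j ∈ s, f j ∈ C := by
  intro s
  induction s using Finset.cons_induction with
  | empty => intro h; exact absurd h (by simp)
  | cons a s ha ih =>
    intro _ hmem
    rw [Finset.sum_cons]
    rcases s.eq_empty_or_nonempty with rfl | hs
    · simpa using hmem a (by simp)
    · exact hC _ _ (hmem a (by simp)) (ih hs fun j hj => hmem j (by simp [hj]))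

lemma scoeff_self_eq_zero {A T : Type*} [AddCommGroup A] [LinearOrder T] {C : Set A}
    (hC : ∀ a b : A, a ∈ C → b ∈ C → a + b ∈ C)
    (τ : A → T) (hτ : WeakStability C τ) (n : ℕ) (hn : 2 ≤ n)
    (κ : ℕ → A) (hκ : ∀ i < n, κ i ∈ C) :
    Scoeff τ τ n κ = 0 := by
  rw [Scoeff, if_neg]
  intro h
  -- betweenness helper
  have hbet : ∀ α γ : A, α ∈ C → γ ∈ C →
      min (τ α) (τ γ) ≤ τ (α + γ) ∧ τ (α + γ) ≤ max (τ α) (τ γ) := by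
    intro α γ hα hγ
    rcases hτ α γ hα hγ with ⟨h1, h2⟩ | ⟨h1, h2⟩
    · exact ⟨le_trans (min_le_left _ _) h1, le_trans h2 (le_max_right _ _)⟩
    · exact ⟨le_trans (min_le_right _ _) h1, le_trans h2 (le_max_left _ _)⟩
  have hlowmem : ∀ j, j < n → lowSum κ j ∈ C := by
    intro j hj
    refine sum_mem_C hC κ _ ⟨0, by simp⟩ fun i hi => hκ i ?_
    simp only [Finset.mem_range] at hi; omega
  have hhighmem : ∀ j, j + 1 < n → highSum κ j n ∈ C := by
    intro j hj
    refine sum_mem_C hC κ _ ⟨j + 1, by simp [Finset.mem_Ico]; omega⟩ fun i hi => hκ i ?_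
    simp only [Finset.mem_Ico] at hi; omega
  have hlowsucc : ∀ j, lowSum κ (j + 1) = lowSum κ j + κ (j + 1) := by
    intro j; simp [lowSum, Finset.sum_range_succ]
  have hhighsucc : ∀ j, j + 2 ≤ n → highSum κ j n = κ (j + 1) + highSum κ (j + 1) n := by
    intro j hj
    rw [highSum, Finset.sum_eq_sum_Ico_succ_bot (by omega)]
    rfl
  -- betweenness facts for low sums
  have hlowbet : ∀ j, j + 1 < n →
      min (τ (lowSum κ j)) (τ (κ (j + 1))) ≤ τ (lowSum κ (j + 1)) ∧
      τ (lowSum κ (j + 1)) ≤ max (τ (lowSum κ j)) (τ (κ (j + 1))) := by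
    intro j hj
    rw [hlowsucc j]
    exact hbet _ _ (hlowmem j (by omega)) (hκ _ hj)
  have hhighbet : ∀ j, j + 2 < n →
      min (τ (κ (j + 1))) (τ (highSum κ (j + 1) n)) ≤ τ (highSum κ j n) ∧
      τ (highSum κ j n) ≤ max (τ (κ (j + 1))) (τ (highSum κ (j + 1) n)) := by
    intro j hj
    rw [hhighsucc j (by omega)]
    exact hbet _ _ (hκ _ (by omega)) (hhighmem _ (by omega))
  have hhighlast : highSum κ (n - 2) n = κ (n - 1) := by
    have : Finset.Ico (n - 2 + 1) n = {n - 1} := by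
      have h1 : n - 2 + 1 = n - 1 := by omega
      rw [h1]
      ext x; simp [Finset.mem_Ico]; omega
    rw [highSum, this, Finset.sum_singleton]
  -- Lemma A: an (a)-position with invariant leads to contradiction
  have lemA : ∀ d j, j + d + 2 = n → SCondA τ τ n κ j →
      τ (lowSum κ j) ≤ τ (κ (j + 1)) → False := by
    intro d
    induction d with
    | zero =>
      intro j hj ⟨_, ha2⟩ hinv
      have hj' : j = n - 2 := by omega
      subst hj'
      rw [hhighlast] at ha2
      rw [show n - 2 + 1 = n - 1 from by omega] at hinv
      exact absurd hinv (not_le.mpr ha2)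
    | succ d ih =>
      intro j hj ⟨ha1, ha2⟩ hinv
      -- position j+1 exists: j + 1 < n - 1
      have hcond := h (j + 1) (Finset.mem_range.mpr (by omega))
      have hb1 := (hhighbet j (by omega)).1
      -- τ high_{j+1} ≤ τ high_j
      have hhj : τ (highSum κ (j + 1) n) ≤ τ (highSum κ j n) := by
        rcases le_total (τ (highSum κ (j + 1) n)) (τ (κ (j + 1))) with hle | hle
        · rw [min_eq_right hle] at hb1; exact hb1
        · rw [min_eq_left hle] at hb1
          exact absurd hb1 (not_le.mpr (lt_of_lt_of_le ha2 hinv))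
      have hlownext : τ (lowSum κ j) ≤ τ (lowSum κ (j + 1)) := by
        have := (hlowbet j (by omega)).1
        rwa [min_eq_left hinv] at this
      rcases hcond with ⟨hA1, hA2⟩ | ⟨hB1, hB2⟩
      · -- (a)_{j+1}; invariant: τ low_{j+1} ≤ τ κ_{j+2}
        have hinv' : τ (lowSum κ (j + 1)) ≤ τ (κ (j + 2)) := by
          have := (hlowbet j (by omega)).2
          rw [max_eq_right hinv] at this
          exact le_trans this hA1
        exact ih (j + 1) (by omega) ⟨hA1, hA2⟩ hinv'
      · -- (b)_{j+1} impossible: τ low_{j+1} > τ high_{j+1}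
        have : τ (highSum κ (j + 1) n) < τ (lowSum κ (j + 1)) :=
          lt_of_le_of_lt hhj (lt_of_lt_of_le ha2 hlownext)
        exact absurd hB2 (not_le.mpr this)
  -- Lemma B
  have lemB : ∀ d j, j + d + 2 = n → SCondB τ τ n κ j →
      τ (κ j) ≤ τ (lowSum κ j) → False := by
    intro d
    induction d with
    | zero =>
      intro j hj ⟨hb1, hb2⟩ hinv
      have hj' : j = n - 2 := by omega
      subst hj'
      rw [hhighlast] at hb2
      rw [show n - 2 + 1 = n - 1 from by omega] at hb1
      exact absurd (le_trans hinv hb2) (not_le.mpr hb1)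
    | succ d ih =>
      intro j hj ⟨hb1, hb2⟩ hinv
      have hcond := h (j + 1) (Finset.mem_range.mpr (by omega))
      have hk1low : τ (κ (j + 1)) ≤ τ (lowSum κ j) := le_trans (le_of_lt hb1) hinv
      have hlow1 : τ (κ (j + 1)) ≤ τ (lowSum κ (j + 1)) := by
        have := (hlowbet j (by omega)).1
        rwa [min_eq_right hk1low] at this
      rcases hcond with ⟨hA1, hA2⟩ | ⟨hB1, hB2⟩
      · -- (a)_{j+1}: show τ low_{j+1} ≤ τκ_{j+1} then apply lemA
        have hinv' : τ (lowSum κ (j + 1)) ≤ τ (κ (j + 1)) := by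
          by_contra hlt
          push_neg at hlt
          have hup : τ (lowSum κ (j + 1)) ≤ τ (lowSum κ j) := by
            have := (hlowbet j (by omega)).2
            rwa [max_eq_left hk1low] at this
          have hhigh : τ (highSum κ j n) ≤ τ (highSum κ (j + 1) n) := by
            have := (hhighbet j (by omega)).2
            have hmax : max (τ (κ (j + 1))) (τ (highSum κ (j + 1) n)) =
                τ (highSum κ (j + 1) n) := by
              apply max_eq_right
              by_contra hc
              push_neg at hc
              have : τ (highSum κ j n) ≤ τ (κ (j+1)) := le_trans this (by
                rw [max_eq_left (le_of_lt hc)])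
              have : τ (lowSum κ (j+1)) ≤ τ (κ (j+1)) :=
                le_trans hup (le_trans hb2 this)
              exact absurd this (not_le.mpr hlt)
            rwa [hmax] at this
          have : τ (lowSum κ (j + 1)) ≤ τ (highSum κ (j + 1) n) :=
            le_trans hup (le_trans hb2 hhigh)
          exact absurd this (not_le.mpr hA2)
        exact lemA d (j + 1) (by omega) ⟨hA1, hA2⟩ (le_trans hinv' hA1)
      · exact ih (j + 1) (by omega) ⟨hB1, hB2⟩ hlow1
  -- start at position 0
  have hlow0 : lowSum κ 0 = κ 0 := by simp [lowSum]
  have h0cond := h 0 (Finset.mem_range.mpr (by omega))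
  rcases h0cond with ⟨hA1, hA2⟩ | hB
  · exact lemA (n - 2) 0 (by omega) ⟨hA1, hA2⟩ (by rw [hlow0]; exact hA1)
  · exact lemB (n - 2) 0 (by omega) hB (by rw [hlow0])

lemma scoeff_one {A T T' : Type*} [AddCommGroup A] [LinearOrder T] [LinearOrder T']
    (τ : A → T) (τ' : A → T') {n : ℕ} (hn : n ≤ 1) (κ : ℕ → A) : Scoeff τ τ' n κ = 1 := by
  simp [Scoeff, Nat.sub_eq_zero_of_le hn]


theorem stmt16 {A T I K : Type*} [AddCommGroup A] [LinearOrder T]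
    [Fintype I] [PartialOrder I] [Fintype K]
    (C : Set A) (hC : ∀ a b : A, a ∈ C → b ∈ C → a + b ∈ C) (h0 : (0 : A) ∉ C)
    (τ : A → T) (hτ : WeakStability C τ)
    (κ : I → A) (hκ : ∀ i, κ i ∈ C)
    (φ : I → K) (hφ : Surjective φ)
    (r : K → K → Prop) (hr : IsPartialOrder K r)
    (htot : ∀ i j : I, φ i = φ j → (i ≤ j ∨ j ≤ i))
    (hdom : ∀ i j : I, φ i ≠ φ j → (i ≤ j ↔ r (φ i) (φ j)))
    (e : ∀ k : K, Fin (Finset.univ.filter (fun i : I => φ i = k)).card → I)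
    (he1 : ∀ k j, φ (e k j) = k)
    (he2 : ∀ k, StrictMono (e k)) :
    (∏ k : K,
      Scoeff τ τ (Finset.univ.filter (fun i : I => φ i = k)).card
        (fun j => if h : j < (Finset.univ.filter (fun i : I => φ i = k)).card then
          κ (e k ⟨j, h⟩) else 0))
    = if Bijective φ then 1 else 0 := by
  classical
  by_cases hbij : Bijective φ
  · rw [if_pos hbij]
    apply Finset.prod_eq_one
    intro k _
    have hcard : (Finset.univ.filter (fun i : I => φ i = k)).card ≤ 1 := by
      rw [Finset.card_le_one]
      intro a ha b hb
      simp only [Finset.mem_filter] at ha hb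
      exact hbij.1 (ha.2.trans hb.2.symm)
    exact scoeff_one τ τ hcard _
  · rw [if_neg hbij]
    have hninj : ¬ Injective φ := fun hinj => hbij ⟨hinj, hφ⟩
    rw [Injective] at hninj
    push_neg at hninj
    obtain ⟨i, j, hij, hne⟩ := hninj
    apply Finset.prod_eq_zero (Finset.mem_univ (φ i))
    have hcard2 : 2 ≤ (Finset.univ.filter (fun x : I => φ x = φ i)).card := by
      have hsub : ({i, j} : Finset I) ⊆ Finset.univ.filter (fun x : I => φ x = φ i) := by
        intro x hx
        simp only [Finset.mem_insert, Finset.mem_singleton] at hx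
        rcases hx with rfl | rfl <;> simp [hij]
      calc 2 = ({i, j} : Finset I).card := (Finset.card_pair hne).symm
        _ ≤ _ := Finset.card_le_card hsub
    refine scoeff_self_eq_zero hC τ hτ _ hcard2 _ ?_
    intro m hm
    rw [dif_pos hm]
    exact hκ _
end
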